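/- arXiv:2405.03856 — 7 statements merged into one kernel-verified Lean document; each statement's English description precedes it below -/
import Mathlib

section
/- Every cubic multigraph with at most two bridges contains a perfect matching. -/
/-- A multigraph on vertex type `V` with edge type `E`: each edge has an
unordered pair of endpoints (loops and parallel edges are allowed). -/
structure Multigraph (V : Type) (E : Type) where
  ends : E → Sym2 V

namespace Multigraph

variable {V E : Type} (G : Multigraph V E)

/-- A single step along an edge of the edge set `ES`. -/
def Step (ES : Set E) (x y : V) : Prop := ∃ e ∈ ES, G.ends e = s(x, y)

/-- `x` and `y` are joined by a walk using only edges of `ES`. -/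
def LinkedOn (ES : Set E) (x y : V) : Prop := Relation.ReflTransGen (G.Step ES) x y

/-- All edges of `ES` have both endpoints in `VS`. -/
def EdgesWithin (VS : Set V) (ES : Set E) : Prop := ∀ e ∈ ES, ∀ x ∈ G.ends e, x ∈ VS

/-- The subgraph with vertex set `VS` and edge set `ES` is connected. -/
def ConnectedOn (VS : Set V) (ES : Set E) : Prop :=
  G.EdgesWithin VS ES ∧ ∀ x ∈ VS, ∀ y ∈ VS, G.LinkedOn ES x y

/-- The degree of `v` in the edge set `ES`; a loop at `v` counts twice. -/
noncomputable def degOn (ES : Set E) (v : V) : ℕ :=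
  {e ∈ ES | v ∈ G.ends e}.ncard + {e ∈ ES | G.ends e = s(v, v)}.ncard

/-- The subgraph `(VS, ES)` is cubic: every vertex has degree exactly `3`. -/
def CubicOn (VS : Set V) (ES : Set E) : Prop :=
  G.EdgesWithin VS ES ∧ ∀ v ∈ VS, G.degOn ES v = 3

/-- `f` is a bridge of the subgraph `(VS, ES)`: removing it disconnects two
vertices of `VS` that were connected. -/
def IsBridgeOn (VS : Set V) (ES : Set E) (f : E) : Prop :=
  f ∈ ES ∧ ∃ x ∈ VS, ∃ y ∈ VS, G.LinkedOn ES x y ∧ ¬ G.LinkedOn (ES \ {f}) x y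

/-- The subgraph `(VS, ES)` has no bridge. -/
def BridgelessOn (VS : Set V) (ES : Set E) : Prop := ∀ f, ¬ G.IsBridgeOn VS ES f

/-- `M` is a perfect matching of the subgraph `(VS, ES)`: a set of non-loop
edges such that every vertex of `VS` is incident to exactly one edge of `M`. -/
def IsPerfectMatchingOn (VS : Set V) (ES : Set E) (M : Set E) : Prop :=
  M ⊆ ES ∧ (∀ e ∈ M, ¬ (G.ends e).IsDiag) ∧ ∀ v ∈ VS, ∃! e, e ∈ M ∧ v ∈ G.ends e

/-- `T` is a spanning tree of the subgraph `(VS, ES)`: it is a connected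
spanning subgraph in which every edge is essential (i.e. it is acyclic). -/
def IsSpanningTreeOn (VS : Set V) (ES : Set E) (T : Set E) : Prop :=
  T ⊆ ES ∧ G.ConnectedOn VS T ∧ ∀ f ∈ T, ¬ G.ConnectedOn VS (T \ {f})

/-- The non-tree edge `e` covers the tree edge `f` of the spanning tree `T`:
`f` lies on the path in `T` connecting the endpoints of `e`, i.e. the
endpoints of `e` get disconnected in `T` after removing `f`. -/
def Covers (T : Set E) (e f : E) : Prop :=
  f ∈ T ∧ e ∉ T ∧ ∃ x y, G.ends e = s(x, y) ∧ ¬ G.LinkedOn (T \ {f}) x y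

/-- `A` is an `M`-alternating cycle: a nonempty connected set of non-loop
edges in which every vertex incident to `A` is incident to exactly one edge
of `A ∩ M` and exactly one edge of `A \ M`. -/
def IsAlternatingCycle (M A : Set E) : Prop :=
  A.Nonempty ∧
  (∀ e ∈ A, ¬ (G.ends e).IsDiag) ∧
  (∀ v, (∃ e ∈ A, v ∈ G.ends e) →
    (∃! e, e ∈ A ∩ M ∧ v ∈ G.ends e) ∧ (∃! e, e ∈ A \ M ∧ v ∈ G.ends e)) ∧
  (∀ x y, (∃ e ∈ A, x ∈ G.ends e) → (∃ e ∈ A, y ∈ G.ends e) → G.LinkedOn A x y)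

end Multigraph

/-! Petersen's argument. By Tutte's theorem for the underlying simple graph it suffices to
show that the number `q` of odd components of `G - u` is at most `|u|` for every vertex set
`u`. Counting endpoints gives `3 |S| = 2 #(edges inside S) + |∂S|` for every vertex set `S`,
so each odd component has an odd number of boundary edges, all of which end in `u`, and
distinct components have disjoint boundaries. A boundary consisting of a single edge makes
that edge a bridge, so at most two odd components have one boundary edge and the others have
at least three: `3 q ≤ |∂u| + 4 ≤ 3 |u| + 4`. As `|V|` is even, `q ≡ |V| - |u| ≡ |u|`
(mod 2), which rules out `q = |u| + 1`. -/

theorem Finset.three_mul_card_le_of_odd_card {ι α : Type*} [DecidableEq α] {s : Finset ι}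
    {B : ι → Finset α} {D F : Finset α} (hdisj : (s : Set ι).PairwiseDisjoint B)
    (hodd : ∀ i ∈ s, Odd (B i).card) (hD : ∀ i ∈ s, B i ⊆ D)
    (hF : ∀ i ∈ s, (B i).card = 1 → B i ⊆ F) :
    3 * s.card ≤ D.card + 2 * F.card := by
  set s₁ := s.filter fun i => (B i).card = 1
  have hsum : ∑ i ∈ s, (B i).card ≤ D.card := by
    rw [← Finset.card_biUnion hdisj]
    exact Finset.card_le_card (Finset.biUnion_subset.mpr hD)
  have hs₁ : s₁.card ≤ F.card := calc
    s₁.card = ∑ i ∈ s₁, (B i).card := by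
      rw [Finset.card_eq_sum_ones]
      exact Finset.sum_congr rfl fun i hi => (Finset.mem_filter.mp hi).2.symm
    _ = (s₁.biUnion B).card :=
      (Finset.card_biUnion (hdisj.subset (Finset.coe_subset.mpr (Finset.filter_subset _ _)))).symm
    _ ≤ F.card := Finset.card_le_card <| Finset.biUnion_subset.mpr fun i hi =>
      hF i (Finset.mem_filter.mp hi).1 (Finset.mem_filter.mp hi).2
  have hpoint : ∀ i ∈ s, 3 ≤ (B i).card + 2 * if (B i).card = 1 then 1 else 0 := by
    intro i hi
    obtain ⟨k, hk⟩ := hodd i hi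
    split_ifs <;> omega
  calc 3 * s.card = ∑ i ∈ s, 3 := by rw [Finset.sum_const, smul_eq_mul, mul_comm]
    _ ≤ ∑ i ∈ s, ((B i).card + 2 * if (B i).card = 1 then 1 else 0) :=
      Finset.sum_le_sum hpoint
    _ = ∑ i ∈ s, (B i).card + 2 * s₁.card := by
      rw [Finset.sum_add_distrib, ← Finset.mul_sum, Finset.card_filter]
    _ ≤ D.card + 2 * F.card := by omega

namespace Multigraph

variable {V E : Type} (G : Multigraph V E)

def boundary (S : Set V) : Set E :=
  {e | (∃ x ∈ G.ends e, x ∈ S) ∧ ∃ y ∈ G.ends e, y ∉ S}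

open scoped Classical in
noncomputable def incidence (e : E) (v : V) : ℕ :=
  (if v ∈ G.ends e then 1 else 0) + if G.ends e = s(v, v) then 1 else 0

def toSimpleGraph : SimpleGraph V := SimpleGraph.fromEdgeSet (Set.range G.ends)

-- `G - u` in the form in which `SimpleGraph.IsTutteViolator` states it.
abbrev deleteVerts (u : Set V) :
    SimpleGraph ((⊤ : G.toSimpleGraph.Subgraph).deleteVerts u).verts :=
  ((⊤ : G.toSimpleGraph.Subgraph).deleteVerts u).coe

variable {G}

theorem LinkedOn.mem_of_disjoint_boundary {ES : Set E} {S : Set V} {x y : V}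
    (h : G.LinkedOn ES x y) (hES : Disjoint ES (G.boundary S)) (hx : x ∈ S) : y ∈ S := by
  induction h with
  | refl => exact hx
  | @tail b c _ hbc ih =>
    obtain ⟨e, he, hends⟩ := hbc
    by_contra hc
    refine Set.disjoint_left.mp hES he ⟨⟨b, ?_, ih⟩, c, ?_, hc⟩ <;> simp [hends]

theorem isBridgeOn_of_boundary_eq_singleton {S : Set V} {f : E} (hf : G.boundary S = {f}) :
    G.IsBridgeOn Set.univ Set.univ f := by
  obtain ⟨⟨x, hxf, hxS⟩, y, hyf, hyS⟩ : f ∈ G.boundary S := hf ▸ rfl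
  have hends : G.ends f = s(x, y) :=
    (Sym2.mem_and_mem_iff (by rintro rfl; exact hyS hxS)).mp ⟨hxf, hyf⟩
  refine ⟨trivial, x, trivial, y, trivial, .single ⟨f, trivial, hends⟩, fun hlink => hyS ?_⟩
  refine hlink.mem_of_disjoint_boundary ?_ hxS
  rw [hf]
  simp

section Handshake

open scoped Classical

theorem degOn_univ_eq_sum_incidence [Fintype E] (v : V) :
    G.degOn Set.univ v = ∑ e, G.incidence e v := by
  simp only [degOn, incidence, Set.sep_univ, Finset.sum_add_distrib, ← Finset.card_filter,
    Set.ncard_eq_toFinset_card', Set.toFinset_ofPred]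

theorem sum_incidence (S : Finset V) (e : E) :
    ∑ v ∈ S, G.incidence e v =
      2 * (if ∀ x ∈ G.ends e, x ∈ S then 1 else 0) + if e ∈ G.boundary S then 1 else 0 := by
  induction h : G.ends e using Sym2.inductionOn with | hf a b => ?_
  have hsummand : ∀ v, G.incidence e v = (if a = v then 1 else 0) + if b = v then 1 else 0 := by
    intro v
    by_cases hav : a = v <;> by_cases hbv : b = v <;> simp [incidence, h, hav, hbv, eq_comm]
  simp only [boundary, Set.mem_ofPred_eq, h, hsummand, Finset.sum_add_distrib,
    Finset.sum_ite_eq]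
  by_cases ha : a ∈ S <;> by_cases hb : b ∈ S <;> simp [ha, hb]

theorem sum_degOn_univ [Fintype E] (S : Finset V) :
    ∑ v ∈ S, G.degOn Set.univ v =
      2 * {e | ∀ x ∈ G.ends e, x ∈ S}.ncard + (G.boundary S).ncard := by
  simp only [degOn_univ_eq_sum_incidence]
  rw [Finset.sum_comm, Finset.sum_congr rfl fun e _ => sum_incidence S e,
    Finset.sum_add_distrib, ← Finset.mul_sum]
  simp only [← Finset.card_filter, Set.ncard_eq_toFinset_card', Set.toFinset_ofPred]
  congr 2
  ext e
  simp

end Handshake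

section Cubic

variable [Fintype V] [Fintype E] (hG : G.CubicOn Set.univ Set.univ)
include hG

theorem CubicOn.three_mul_ncard (S : Set V) :
    3 * S.ncard = 2 * {e | ∀ x ∈ G.ends e, x ∈ S}.ncard + (G.boundary S).ncard := by
  classical
  have h := G.sum_degOn_univ S.toFinset
  simp only [Set.coe_toFinset, Set.mem_toFinset, hG.2 _ trivial, Finset.sum_const,
    smul_eq_mul] at h
  rw [Set.ncard_eq_toFinset_card', mul_comm, h]

theorem CubicOn.ncard_boundary_le (S : Set V) : (G.boundary S).ncard ≤ 3 * S.ncard := by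
  have := hG.three_mul_ncard S
  omega

theorem CubicOn.odd_ncard_boundary_iff (S : Set V) :
    Odd (G.boundary S).ncard ↔ Odd S.ncard := by
  have := hG.three_mul_ncard S
  simp only [Nat.odd_iff]
  omega

theorem CubicOn.even_card : Even (Nat.card V) := by
  have hempty : G.boundary Set.univ = ∅ := by simp [boundary]
  have := hG.odd_ncard_boundary_iff Set.univ
  rw [hempty, Set.ncard_empty, Set.ncard_univ] at this
  simpa [Nat.not_odd_iff_even] using this

end Cubic

theorem exists_isPerfectMatchingOn_of_isPerfectMatching {M : G.toSimpleGraph.Subgraph}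
    (hM : M.IsPerfectMatching) : ∃ M' : Set E, G.IsPerfectMatchingOn Set.univ Set.univ M' := by
  obtain ⟨M', -, hbij⟩ := Set.exists_subset_bijOn (G.ends ⁻¹' M.edgeSet) G.ends
  rw [Set.image_preimage_eq_of_subset fun z hz => by
    have := M.edgeSet_subset hz
    rw [toSimpleGraph, SimpleGraph.edgeSet_fromEdgeSet] at this
    exact this.1] at hbij
  refine ⟨M', Set.subset_univ _, fun e he => G.toSimpleGraph.not_isDiag_of_mem_edgeSet
    (M.edgeSet_subset (hbij.mapsTo he)), fun v _ => ?_⟩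
  obtain ⟨w, hvw, hw⟩ := hM.1 (hM.2 v)
  obtain ⟨e, he, hends⟩ := hbij.surjOn (M.mem_edgeSet.mpr hvw)
  refine ⟨e, ⟨he, hends ▸ Sym2.mem_mk_left v w⟩,
    fun e' ⟨he', hve'⟩ => hbij.injOn he' he ?_⟩
  obtain ⟨w', hw'⟩ := Sym2.mem_iff_exists.mp hve'
  have hvw' := hbij.mapsTo he'
  rw [hw', M.mem_edgeSet] at hvw'
  rw [hends, hw', hw w' hvw']

section DeleteVerts

open SimpleGraph

variable {u : Set V}

theorem exists_ends_eq_of_mem_boundary_supp {c : (G.deleteVerts u).ConnectedComponent} {e : E}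
    (he : e ∈ G.boundary ((↑) '' c.supp)) :
    ∃ x ∈ ((↑) '' c.supp : Set V), ∃ t ∈ u, G.ends e = s(x, t) := by
  obtain ⟨⟨x, hxe, hx⟩, y, hye, hy⟩ := he
  have hends : G.ends e = s(x, y) :=
    (Sym2.mem_and_mem_iff (by rintro rfl; exact hy hx)).mp ⟨hxe, hye⟩
  refine ⟨x, hx, y, ?_, hends⟩
  by_contra hyu
  refine hy (ConnectedComponent.mem_coe_supp_of_adj hx (by simp [hyu]) ?_)
  obtain ⟨x', hx', rfl⟩ := hx
  rw [Subgraph.deleteVerts_adj, Subgraph.top_adj, toSimpleGraph, fromEdgeSet_adj]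
  exact ⟨trivial, by simpa using x'.2, trivial, hyu, ⟨e, hends⟩,
    fun h => hy ⟨x', hx', h⟩⟩

theorem boundary_supp_subset_boundary (c : (G.deleteVerts u).ConnectedComponent) :
    G.boundary ((↑) '' c.supp) ⊆ G.boundary u := by
  intro e he
  obtain ⟨_, ⟨x, -, rfl⟩, t, ht, hends⟩ := exists_ends_eq_of_mem_boundary_supp he
  exact ⟨⟨t, hends ▸ Sym2.mem_mk_right _ _, ht⟩, x, hends ▸ Sym2.mem_mk_left _ _,
    by simpa using x.2⟩

theorem disjoint_boundary_supp {c c' : (G.deleteVerts u).ConnectedComponent} (h : c ≠ c') :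
    Disjoint (G.boundary ((↑) '' c.supp)) (G.boundary ((↑) '' c'.supp)) := by
  refine Set.disjoint_left.mpr fun e he he' => h ?_
  obtain ⟨_, ⟨x, hx, rfl⟩, t, ht, hends⟩ := exists_ends_eq_of_mem_boundary_supp he
  obtain ⟨_, ⟨x', hx', rfl⟩, t', ht', hends'⟩ := exists_ends_eq_of_mem_boundary_supp he'
  rcases Sym2.eq_iff.mp (hends.symm.trans hends') with ⟨hxx', -⟩ | ⟨hxt', -⟩
  · rw [Subtype.val_injective hxx'] at hx
    exact hx.symm.trans hx'
  · exact absurd (hxt' ▸ ht') (by simpa using x.2)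

variable [Fintype V] [Fintype E] (hG : G.CubicOn Set.univ Set.univ)
include hG

theorem CubicOn.three_mul_ncard_oddComponents_le (u : Set V) :
    3 * (G.deleteVerts u).oddComponents.ncard ≤
      3 * u.ncard + 2 * {f : E | G.IsBridgeOn Set.univ Set.univ f}.ncard := by
  classical
  have hcount := Finset.three_mul_card_le_of_odd_card
    (s := (G.deleteVerts u).oddComponents.toFinset)
    (B := fun c => (G.boundary ((↑) '' c.supp)).toFinset) (D := (G.boundary u).toFinset)
    (F := {f | G.IsBridgeOn Set.univ Set.univ f}.toFinset)
    (fun c _ c' _ hcc' => Set.disjoint_toFinset.mpr (disjoint_boundary_supp hcc'))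
    (fun c hc => by
      rw [← Set.ncard_eq_toFinset_card', hG.odd_ncard_boundary_iff,
        Set.ncard_image_of_injective _ Subtype.val_injective]
      simpa using hc)
    (fun c _ => Set.toFinset_subset_toFinset.mpr (boundary_supp_subset_boundary c))
    (fun c _ hc => by
      obtain ⟨f, hf⟩ := Finset.card_eq_one.mp hc
      have hbridge := isBridgeOn_of_boundary_eq_singleton (by
        rw [← Set.coe_toFinset (G.boundary _), hf, Finset.coe_singleton])
      rwa [hf, Finset.singleton_subset_iff, Set.mem_toFinset])
  simp only [← Set.ncard_eq_toFinset_card'] at hcount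
  have := hG.ncard_boundary_le u
  omega

theorem CubicOn.odd_ncard_oddComponents_iff (u : Set V) :
    Odd (G.deleteVerts u).oddComponents.ncard ↔ Odd u.ncard := by
  rw [odd_ncard_oddComponents, Nat.card_coe_set_eq, Subgraph.deleteVerts_verts,
    Subgraph.verts_top, Set.ncard_sdiff (Set.subset_univ u), Set.ncard_univ]
  have heven := Nat.even_iff.mp hG.even_card
  have hle := Set.ncard_le_card u
  simp only [Nat.odd_iff]
  omega

theorem CubicOn.not_isTutteViolator
    (hbridges : {f : E | G.IsBridgeOn Set.univ Set.univ f}.ncard ≤ 2) (u : Set V) :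
    ¬ G.toSimpleGraph.IsTutteViolator u := by
  have hcount := hG.three_mul_ncard_oddComponents_le u
  have hparity := hG.odd_ncard_oddComponents_iff u
  simp only [Nat.odd_iff] at hparity
  rw [IsTutteViolator, not_lt]
  change (G.deleteVerts u).oddComponents.ncard ≤ u.ncard
  omega

end DeleteVerts

end Multigraph

/-- Every cubic multigraph with at most two bridges contains a perfect
matching. -/
theorem cubic_at_most_two_bridges_perfect_matching {V E : Type} [Fintype V] [Fintype E]
    (G : Multigraph V E)
    (hcubic : G.CubicOn Set.univ Set.univ)
    (hbridges : {f : E | G.IsBridgeOn Set.univ Set.univ f}.ncard ≤ 2) :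
    ∃ M : Set E, G.IsPerfectMatchingOn Set.univ Set.univ M := by
  obtain ⟨M, hM⟩ := SimpleGraph.tutte.mpr (hcubic.not_isTutteViolator hbridges)
  exact Multigraph.exists_isPerfectMatchingOn_of_isPerfectMatching hM
end

section
/- Let G be a bridgeless cubic multigraph and {v,w} a single edge of G (i.e., exactly one edge joins v and w). Let {a,v},{b,v} be the other edges at v and {c,w},{d,w} the other edges at w. Define H1 = ((G\v)\w) ∪ {a,c} ∪ {b,d} and H2 = ((G\v)\w) ∪ {a,d} ∪ {b,c}. Then both H1 and H2 are cubic, and at least one of H1, H2 is bridgeless. -/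
/-!
Cubicity of the two spliced graphs is a degree count at each vertex other than `v, w`.

For bridgelessness, recall that in a bridgeless graph no edge cut consists of a single edge. A
bridge of `H1` cuts `V \ {v, w}` into two sides; a new edge cannot be the bridge, nor can an old
one with `a, b, c, d` on one side, since in either case `G` would have a one-edge cut. So the side
`S` avoiding `b` contains `a, c`, misses `d`, and is left in `G` exactly by `ea`, `ec` and the
bridge `g₁`. Likewise a bridge `g₂` of `H2` gives `T ∋ a, d` left by `ea`, `ed`, `g₂` only. Each of
the four regions `S ∩ T ∋ a`, `S \ T ∋ c`, `T \ S ∋ d` and `V \ (S ∪ T ∪ {v, w}) ∋ b` is left by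
exactly one edge at `v` or `w`, hence also by `g₁` or `g₂`. This forces both `g₁` and `g₂` to stay
inside or outside `X = {x ≠ w | x ∈ S ↔ x ∈ T}`, and then `vw` is the only edge leaving `X`.
-/

namespace Multigraph

variable {V E : Type} {G : Multigraph V E}

variable (G) in
def Crosses (Z : Set V) (e : E) : Prop :=
  ∃ x ∈ G.ends e, ∃ y ∈ G.ends e, x ∈ Z ∧ y ∉ Z

theorem crosses_iff_of_ends {Z : Set V} {e : E} {x y : V} (he : G.ends e = s(x, y)) :
    G.Crosses Z e ↔ ¬(x ∈ Z ↔ y ∈ Z) := by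
  simp only [Crosses, he, Sym2.mem_iff, exists_eq_or_imp, exists_eq_left]
  tauto

theorem not_crosses_iff {Z : Set V} {e : E} :
    ¬G.Crosses Z e ↔ ∀ x ∈ G.ends e, ∀ y ∈ G.ends e, (x ∈ Z ↔ y ∈ Z) := by
  simp only [Crosses, not_exists, not_and, not_not]
  exact ⟨fun h x hx y hy => ⟨h x hx y hy, fun hyZ => by_contra fun hxZ => hxZ (h y hy x hx hyZ)⟩,
    fun h x hx y hy hxZ => (h x hx y hy).1 hxZ⟩

theorem crosses_sdiff_iff {U Z : Set V} {e : E} (he : ∀ x ∈ G.ends e, x ∈ U) :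
    G.Crosses (U \ Z) e ↔ G.Crosses Z e := by
  constructor
  · rintro ⟨x, hx, y, hy, hxZ, hyZ⟩
    exact ⟨y, hy, x, hx, by_contra fun h => hyZ ⟨he y hy, h⟩, hxZ.2⟩
  · rintro ⟨x, hx, y, hy, hxZ, hyZ⟩
    exact ⟨y, hy, x, hx, ⟨he y hy, hyZ⟩, fun h => h.2 hxZ⟩

theorem Crosses.crosses_or_crosses {S T Q U : Set V} {e : E} (h : G.Crosses Q e)
    (hU : ∀ x ∈ G.ends e, x ∈ U)
    (hQ : ∀ x ∈ U, ∀ y ∈ U, (x ∈ S ↔ y ∈ S) → (x ∈ T ↔ y ∈ T) → x ∈ Q → y ∈ Q) :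
    G.Crosses S e ∨ G.Crosses T e := by
  obtain ⟨x, hx, y, hy, hxQ, hyQ⟩ := h
  by_contra! hST
  exact hyQ (hQ x (hU x hx) y (hU y hy) (not_crosses_iff.1 hST.1 x hx y hy)
    (not_crosses_iff.1 hST.2 x hx y hy) hxQ)

theorem not_crosses_setOf_linkedOn {ES : Set E} {e : E} (he : e ∈ ES) (x : V) :
    ¬G.Crosses {z | G.LinkedOn ES x z} e := by
  rintro ⟨y, hy, z, hz, hxy, hxz⟩
  obtain rfl | hyz := eq_or_ne y z
  · exact hxz hxy
  · exact hxz (hxy.tail ⟨e, he, (Sym2.mem_and_mem_iff hyz).1 ⟨hy, hz⟩⟩)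

theorem LinkedOn.exists_crosses {ES : Set E} {Z : Set V} {p q : V} (h : G.LinkedOn ES p q)
    (hp : p ∈ Z) (hq : q ∉ Z) : ∃ e ∈ ES, G.Crosses Z e := by
  induction h with
  | refl => exact absurd hp hq
  | @tail y z _ hyz ih =>
    by_cases hy : y ∈ Z
    · obtain ⟨e, he, hends⟩ := hyz
      exact ⟨e, he, (crosses_iff_of_ends hends).2 (by tauto)⟩
    · exact ih hy

theorem BridgelessOn.exists_crosses_ne (hG : G.BridgelessOn Set.univ Set.univ) {Z : Set V}
    {g : E} (hg : G.Crosses Z g) : ∃ e ≠ g, G.Crosses Z e := by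
  obtain ⟨x, hx, y, hy, hxZ, hyZ⟩ := hg
  have hxy : x ≠ y := by rintro rfl; exact hyZ hxZ
  have hlink : G.LinkedOn Set.univ x y :=
    .single ⟨g, trivial, (Sym2.mem_and_mem_iff hxy).1 ⟨hx, hy⟩⟩
  by_contra! hall
  refine hG g ⟨trivial, x, trivial, y, trivial, hlink, fun h => ?_⟩
  obtain ⟨e, he, hcr⟩ := h.exists_crosses hxZ hyZ
  exact hall e he.2 hcr

theorem IsBridgeOn.exists_cut {VS : Set V} {ES : Set E} {f : E} (hES : G.EdgesWithin VS ES)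
    (hf : G.IsBridgeOn VS ES f) : ∃ Z ⊆ VS, ∀ e ∈ ES, G.Crosses Z e ↔ e = f := by
  obtain ⟨hfES, x, hx, y, -, hxy, hnot⟩ := hf
  set Z := {z | G.LinkedOn (ES \ {f}) x z}
  have hZ : ∀ e ∈ ES, e ≠ f → ¬G.Crosses Z e :=
    fun e he hef => not_crosses_setOf_linkedOn (ES := ES \ {f}) ⟨he, hef⟩ x
  have hfZ : G.Crosses Z f := by
    obtain ⟨e, he, hcr⟩ := hxy.exists_crosses (Z := Z) .refl hnot
    by_cases hef : e = f
    · exact hef ▸ hcr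
    · exact absurd hcr (hZ e he hef)
  refine ⟨Z, fun z hz => ?_, fun e he => ⟨fun h => by_contra fun hef => hZ e he hef h, ?_⟩⟩
  · induction hz with
    | refl => exact hx
    | tail _ hstep _ =>
      obtain ⟨e, he, hends⟩ := hstep
      exact hES e he.1 _ (hends ▸ Sym2.mem_mk_right _ _)
  · rintro rfl
    exact hfZ

theorem IsBridgeOn.exists_cut_notMem {VS : Set V} {ES : Set E} {f : E}
    (hES : G.EdgesWithin VS ES) (hf : G.IsBridgeOn VS ES f) (x : V) :
    ∃ Z ⊆ VS, x ∉ Z ∧ ∀ e ∈ ES, G.Crosses Z e ↔ e = f := by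
  obtain ⟨Z, hZ, hcut⟩ := hf.exists_cut hES
  by_cases hxZ : x ∈ Z
  · exact ⟨VS \ Z, Set.sdiff_subset, fun h => h.2 hxZ,
      fun e he => (crosses_sdiff_iff (hES e he)).trans (hcut e he)⟩
  · exact ⟨Z, hZ, hxZ, hcut⟩

theorem degOn_union [Finite E] {A B : Set E} (h : Disjoint A B) (x : V) :
    G.degOn (A ∪ B) x = G.degOn A x + G.degOn B x := by
  simp only [degOn, Set.mem_union, Set.sep_union]
  rw [Set.ncard_union_eq (h.mono (Set.sep_subset _ _) (Set.sep_subset _ _)),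
    Set.ncard_union_eq (h.mono (Set.sep_subset _ _) (Set.sep_subset _ _))]
  ring

theorem degOn_insert [Finite E] {A : Set E} {e : E} (he : e ∉ A) (x : V) :
    G.degOn (insert e A) x = G.degOn {e} x + G.degOn A x := by
  rw [Set.insert_eq, degOn_union (Set.disjoint_singleton_left.2 he)]

theorem degOn_singleton [DecidableEq V] {e : E} {x y : V} (he : G.ends e = s(x, y)) (z : V) :
    G.degOn {e} z = (if z = x then 1 else 0) + (if z = y then 1 else 0) := by
  classical
  have hsep : ∀ (p : E → Prop) [DecidablePred p],
      {e' ∈ ({e} : Set E) | p e'}.ncard = if p e then 1 else 0 := by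
    intro p _
    split_ifs with h
    · exact Set.ncard_eq_one.2 ⟨e, Set.ext fun e' =>
        ⟨fun h' => h'.1, fun h' => ⟨h', (Set.mem_singleton_iff.1 h').symm ▸ h⟩⟩⟩
    · have hempty : {e' ∈ ({e} : Set E) | p e'} = ∅ :=
        Set.eq_empty_of_forall_notMem fun e' h' => h (Set.mem_singleton_iff.1 h'.1 ▸ h'.2)
      rw [hempty, Set.ncard_empty]
  rw [degOn, hsep, hsep, he]
  clear hsep he
  by_cases hx : z = x <;> by_cases hy : z = y <;> subst_vars <;> simp_all <;> grind

theorem degOn_image {E' : Type} {H : Multigraph V E'} {φ : E → E'} (hφ : φ.Injective)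
    (hends : ∀ e, H.ends (φ e) = G.ends e) (A : Set E) (x : V) :
    H.degOn (φ '' A) x = G.degOn A x := by
  have hsep : ∀ p : Sym2 V → Prop,
      {e' ∈ φ '' A | p (H.ends e')} = φ '' {e ∈ A | p (G.ends e)} := by
    intro p
    ext e'
    constructor
    · rintro ⟨⟨e, he, rfl⟩, hp⟩
      exact ⟨e, ⟨he, hends e ▸ hp⟩, rfl⟩
    · rintro ⟨e, ⟨he, hp⟩, rfl⟩
      exact ⟨⟨e, he, rfl⟩, (hends e).symm ▸ hp⟩
  simp only [degOn]
  rw [hsep (x ∈ ·), hsep (· = s(x, x)), Set.ncard_image_of_injective _ hφ,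
    Set.ncard_image_of_injective _ hφ]

theorem incident_eq_of_degOn_eq_three [Finite E] {v : V} (hv : G.degOn Set.univ v = 3)
    {e₁ e₂ e₃ : E} (h₁₂ : e₁ ≠ e₂) (h₁₃ : e₁ ≠ e₃) (h₂₃ : e₂ ≠ e₃) (hm₁ : v ∈ G.ends e₁)
    (hm₂ : v ∈ G.ends e₂) (hm₃ : v ∈ G.ends e₃) :
    {e | v ∈ G.ends e} = {e₁, e₂, e₃} ∧ ∀ e, G.ends e ≠ s(v, v) := by
  simp only [degOn, Set.sep_univ] at hv
  have h3 : ({e₁, e₂, e₃} : Set E).ncard = 3 := Set.ncard_eq_three.2 ⟨_, _, _, h₁₂, h₁₃, h₂₃, rfl⟩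
  have hsub : ({e₁, e₂, e₃} : Set E) ⊆ {e | v ∈ G.ends e} := by
    rintro e (rfl | rfl | rfl) <;> assumption
  have hle := Set.ncard_le_ncard hsub
  refine ⟨(Set.eq_of_subset_of_ncard_le hsub (by omega)).symm, fun e he => ?_⟩
  have : 0 < {e | G.ends e = s(v, v)}.ncard := (Set.ncard_pos).2 ⟨e, he⟩
  omega

variable (G) in
def splice (a c b d : V) : Multigraph V (E ⊕ Fin 2) :=
  ⟨Sum.elim G.ends ![s(a, c), s(b, d)]⟩

variable (G) in
def spliceEdges (v w : V) : Set (E ⊕ Fin 2) :=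
  Sum.inl '' {e | v ∉ G.ends e ∧ w ∉ G.ends e} ∪ Set.range Sum.inr

@[simp]
theorem inl_mem_spliceEdges {v w : V} {e : E} :
    Sum.inl e ∈ G.spliceEdges v w ↔ v ∉ G.ends e ∧ w ∉ G.ends e := by
  simp [spliceEdges]

structure Junction (G : Multigraph V E) (v w a b c d : V) (evw ea eb ec ed : E) : Prop where
  ne : v ≠ w
  ends_evw : G.ends evw = s(v, w)
  ends_ea : G.ends ea = s(a, v)
  ends_eb : G.ends eb = s(b, v)
  ends_ec : G.ends ec = s(c, w)
  ends_ed : G.ends ed = s(d, w)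
  ea_ne_eb : ea ≠ eb
  ec_ne_ed : ec ≠ ed
  eq_of_left_mem : ∀ e, v ∈ G.ends e → e = evw ∨ e = ea ∨ e = eb
  eq_of_right_mem : ∀ e, w ∈ G.ends e → e = evw ∨ e = ec ∨ e = ed
  a_ne : a ≠ v ∧ a ≠ w
  b_ne : b ≠ v ∧ b ≠ w
  c_ne : c ≠ v ∧ c ≠ w
  d_ne : d ≠ v ∧ d ≠ w

/-- The trace in `G` of a bridge of `G.splice a c b d` (see `Junction.exists_isSeparator`). -/
structure IsSeparator (G : Multigraph V E) (v w a c b d : V) (ea ec g : E) (S : Set V) :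
    Prop where
  subset : S ⊆ {x | x ≠ v ∧ x ≠ w}
  mem : a ∈ S ∧ c ∈ S
  notMem : b ∉ S ∧ d ∉ S
  notMem_ends : v ∉ G.ends g ∧ w ∉ G.ends g
  crosses : G.Crosses S g
  eq_of_crosses : ∀ e, G.Crosses S e → e = g ∨ e = ea ∨ e = ec

namespace IsSeparator

variable {v w a c b d : V} {ea ec g : E} {S : Set V}

theorem notMem_deleted (hS : G.IsSeparator v w a c b d ea ec g S) : v ∉ S ∧ w ∉ S :=
  ⟨fun h => (hS.subset h).1 rfl, fun h => (hS.subset h).2 rfl⟩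

theorem exists_ends (hS : G.IsSeparator v w a c b d ea ec g S) :
    ∃ p q, G.ends g = s(p, q) ∧ p ∈ S ∧ q ∉ S ∧ (p ≠ v ∧ p ≠ w) ∧ (q ≠ v ∧ q ≠ w) := by
  obtain ⟨p, hp, q, hq, hpS, hqS⟩ := hS.crosses
  have hg := (Sym2.mem_and_mem_iff fun h : p = q => hqS (h ▸ hpS)).1 ⟨hp, hq⟩
  obtain ⟨hv, hw⟩ := hS.notMem_ends
  refine ⟨p, q, hg, hpS, hqS, ?_⟩
  simp only [hg, Sym2.mem_iff, not_or] at hv hw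
  exact ⟨⟨Ne.symm hv.1, Ne.symm hw.1⟩, Ne.symm hv.2, Ne.symm hw.2⟩

end IsSeparator

namespace Junction

variable {v w a b c d : V} {evw ea eb ec ed : E}

theorem of_cubicOn [Finite E] (hG : G.CubicOn Set.univ Set.univ) (hvw : v ≠ w)
    (hevw : G.ends evw = s(v, w)) (hsingle : ∀ e : E, G.ends e = s(v, w) → e = evw)
    (hea : G.ends ea = s(a, v)) (heb : G.ends eb = s(b, v))
    (hec : G.ends ec = s(c, w)) (hed : G.ends ed = s(d, w))
    (hab : ea ≠ eb) (hcd : ec ≠ ed)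
    (ha : ea ≠ evw) (hb : eb ≠ evw) (hc : ec ≠ evw) (hd : ed ≠ evw) :
    G.Junction v w a b c d evw ea eb ec ed := by
  obtain ⟨hv, hvloop⟩ := incident_eq_of_degOn_eq_three (hG.2 v trivial) (Ne.symm ha)
    (Ne.symm hb) hab (by simp [hevw]) (by simp [hea]) (by simp [heb])
  obtain ⟨hw, hwloop⟩ := incident_eq_of_degOn_eq_three (hG.2 w trivial) (Ne.symm hc)
    (Ne.symm hd) hcd (by simp [hevw]) (by simp [hec]) (by simp [hed])
  have hswap : s(w, v) = s(v, w) := Sym2.eq_swap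
  refine ⟨hvw, hevw, hea, heb, hec, hed, hab, hcd, fun e he => by simpa using hv.subset he,
    fun e he => by simpa using hw.subset he, ⟨?_, ?_⟩, ⟨?_, ?_⟩, ⟨?_, ?_⟩, ⟨?_, ?_⟩⟩
  all_goals rintro rfl
  · exact hvloop ea hea
  · exact ha (hsingle ea (hea.trans hswap))
  · exact hvloop eb heb
  · exact hb (hsingle eb (heb.trans hswap))
  · exact hc (hsingle ec hec)
  · exact hwloop ec hec
  · exact hd (hsingle ed hed)
  · exact hwloop ed hed

theorem swap (J : G.Junction v w a b c d evw ea eb ec ed) :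
    G.Junction v w a b d c evw ea eb ed ec where
  __ := J
  ends_ec := J.ends_ed
  ends_ed := J.ends_ec
  ec_ne_ed := J.ec_ne_ed.symm
  eq_of_right_mem e he := by have := J.eq_of_right_mem e he; tauto
  c_ne := J.d_ne
  d_ne := J.c_ne

theorem spliceEdges_eq (J : G.Junction v w a b c d evw ea eb ec ed) :
    G.spliceEdges v w =
      Sum.inl '' {e | e ∉ ({evw, ea, eb, ec, ed} : Set E)} ∪ Set.range Sum.inr := by
  have hinner :
      {e | v ∉ G.ends e ∧ w ∉ G.ends e} = {e | e ∉ ({evw, ea, eb, ec, ed} : Set E)} := by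
    ext e
    simp only [Set.mem_ofPred_eq, Set.mem_insert_iff, Set.mem_singleton_iff, not_or]
    constructor
    · rintro ⟨hv, hw⟩
      refine ⟨?_, ?_, ?_, ?_, ?_⟩ <;> rintro rfl <;>
        simp [J.ends_evw, J.ends_ea, J.ends_eb, J.ends_ec, J.ends_ed] at hv hw
    · rintro ⟨h₁, h₂, h₃, h₄, h₅⟩
      exact ⟨fun hv => by rcases J.eq_of_left_mem e hv with rfl | rfl | rfl <;> contradiction,
        fun hw => by rcases J.eq_of_right_mem e hw with rfl | rfl | rfl <;> contradiction⟩
  rw [spliceEdges, hinner]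

theorem edgesWithin_splice (J : G.Junction v w a b c d evw ea eb ec ed) :
    (G.splice a c b d).EdgesWithin {x | x ≠ v ∧ x ≠ w} (G.spliceEdges v w) := by
  rintro _ (⟨e, ⟨hv, hw⟩, rfl⟩ | ⟨i, rfl⟩) x hx
  · exact ⟨fun h => hv (h ▸ hx), fun h => hw (h ▸ hx)⟩
  · fin_cases i <;> simp [splice] at hx <;> rcases hx with rfl | rfl
    exacts [J.a_ne, J.c_ne, J.b_ne, J.d_ne]

theorem edges_ne (J : G.Junction v w a b c d evw ea eb ec ed) :
    evw ≠ ea ∧ evw ≠ eb ∧ evw ≠ ec ∧ evw ≠ ed ∧ ea ≠ ec ∧ ea ≠ ed ∧ eb ≠ ec ∧ eb ≠ ed := by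
  have := J.ne
  have := J.a_ne
  have := J.b_ne
  have := J.c_ne
  have := J.d_ne
  refine ⟨?_, ?_, ?_, ?_, ?_, ?_, ?_, ?_⟩ <;> intro h <;> have h' := congrArg G.ends h <;>
    simp only [J.ends_evw, J.ends_ea, J.ends_eb, J.ends_ec, J.ends_ed, Sym2.eq_iff] at h' <;>
    grind

theorem univ_eq_insert (J : G.Junction v w a b c d evw ea eb ec ed) :
    Set.univ = insert evw (insert ea (insert eb (insert ec (insert ed
      {e | v ∉ G.ends e ∧ w ∉ G.ends e})))) := by
  ext e
  simp only [Set.mem_univ, Set.mem_insert_iff, true_iff]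
  by_cases hv : v ∈ G.ends e
  · have := J.eq_of_left_mem e hv
    tauto
  by_cases hw : w ∈ G.ends e
  · have := J.eq_of_right_mem e hw
    tauto
  exact .inr (.inr (.inr (.inr (.inr ⟨hv, hw⟩))))

theorem cubicOn_splice [Finite E] (J : G.Junction v w a b c d evw ea eb ec ed)
    (hG : G.CubicOn Set.univ Set.univ) :
    (G.splice a c b d).CubicOn {x | x ≠ v ∧ x ≠ w} (G.spliceEdges v w) := by
  classical
  refine ⟨J.edgesWithin_splice, fun x ⟨hxv, hxw⟩ => ?_⟩
  have hGx := hG.2 x trivial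
  rw [J.univ_eq_insert, degOn_insert, degOn_insert, degOn_insert, degOn_insert, degOn_insert,
    degOn_singleton J.ends_evw, degOn_singleton J.ends_ea, degOn_singleton J.ends_eb,
    degOn_singleton J.ends_ec, degOn_singleton J.ends_ed] at hGx
  have hES : G.spliceEdges v w = insert (Sum.inr 0) (insert (Sum.inr 1)
      (Sum.inl '' {e | v ∉ G.ends e ∧ w ∉ G.ends e})) := by
    ext (e | i)
    · simp [spliceEdges]
    · fin_cases i <;> simp [spliceEdges]
  rw [hES, degOn_insert, degOn_insert, degOn_image Sum.inl_injective (fun _ => rfl),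
    degOn_singleton (rfl : (G.splice a c b d).ends (Sum.inr 0) = s(a, c)),
    degOn_singleton (rfl : (G.splice a c b d).ends (Sum.inr 1) = s(b, d))]
  · simp only [if_neg hxv, if_neg hxw] at hGx
    omega
  all_goals simp [J.edges_ne, J.ea_ne_eb, J.ec_ne_ed, J.ends_evw, J.ends_ea, J.ends_eb,
    J.ends_ec, J.ends_ed]

theorem eq_of_crosses_of_cut (J : G.Junction v w a b c d evw ea eb ec ed) {Y : Set V}
    (hY : Y ⊆ {x | x ≠ v ∧ x ≠ w}) {f : E ⊕ Fin 2}
    (hcut : ∀ e ∈ G.spliceEdges v w, (G.splice a c b d).Crosses Y e ↔ e = f) {e : E}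
    (he : G.Crosses Y e) :
    Sum.inl e = f ∨ (e = ea ∧ a ∈ Y) ∨ (e = eb ∧ b ∈ Y) ∨ (e = ec ∧ c ∈ Y) ∨
      (e = ed ∧ d ∈ Y) := by
  have hv : v ∉ Y := fun h => (hY h).1 rfl
  have hw : w ∉ Y := fun h => (hY h).2 rfl
  by_cases hve : v ∈ G.ends e
  · rcases J.eq_of_left_mem e hve with rfl | rfl | rfl
    · simp [crosses_iff_of_ends J.ends_evw, hv, hw] at he
    · simp_all [crosses_iff_of_ends J.ends_ea]
    · simp_all [crosses_iff_of_ends J.ends_eb]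
  by_cases hwe : w ∈ G.ends e
  · rcases J.eq_of_right_mem e hwe with rfl | rfl | rfl
    · simp [crosses_iff_of_ends J.ends_evw, hv, hw] at he
    · simp_all [crosses_iff_of_ends J.ends_ec]
    · simp_all [crosses_iff_of_ends J.ends_ed]
  exact .inl ((hcut _ (inl_mem_spliceEdges.2 ⟨hve, hwe⟩)).1 he)

theorem isSeparator_of_isBridgeOn_inl (J : G.Junction v w a b c d evw ea eb ec ed)
    (hG : G.BridgelessOn Set.univ Set.univ) {g : E}
    (hf : (G.splice a c b d).IsBridgeOn {x | x ≠ v ∧ x ≠ w} (G.spliceEdges v w) (Sum.inl g)) :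
    ∃ S, G.IsSeparator v w a c b d ea ec g S := by
  obtain ⟨S, hS, hbS, hcut⟩ := hf.exists_cut_notMem J.edgesWithin_splice b
  have hac : a ∈ S ↔ c ∈ S := by
    simpa using (crosses_iff_of_ends rfl).symm.trans (hcut _ (.inr ⟨0, rfl⟩))
  have hbd : b ∈ S ↔ d ∈ S := by
    simpa using (crosses_iff_of_ends rfl).symm.trans (hcut _ (.inr ⟨1, rfl⟩))
  have hgS : G.Crosses S g := (hcut _ hf.1).2 rfl
  by_cases haS : a ∈ S
  · refine ⟨S, hS, ⟨haS, hac.1 haS⟩, ⟨hbS, mt hbd.2 hbS⟩, inl_mem_spliceEdges.1 hf.1, hgS,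
      fun e he => ?_⟩
    have := J.eq_of_crosses_of_cut hS hcut he
    simp_all
  · obtain ⟨e, hne, he⟩ := hG.exists_crosses_ne hgS
    have := J.eq_of_crosses_of_cut hS hcut he
    simp_all

theorem not_isBridgeOn_inr (J : G.Junction v w a b c d evw ea eb ec ed)
    (hG : G.BridgelessOn Set.univ Set.univ) (i : Fin 2) :
    ¬(G.splice a c b d).IsBridgeOn {x | x ≠ v ∧ x ≠ w} (G.spliceEdges v w) (Sum.inr i) := by
  intro hf
  have hnew : ∀ Y, (∀ e ∈ G.spliceEdges v w, (G.splice a c b d).Crosses Y e ↔ e = Sum.inr i) →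
      (¬(a ∈ Y ↔ c ∈ Y) ↔ i = 0) ∧ (¬(b ∈ Y ↔ d ∈ Y) ↔ i = 1) := fun Y hY =>
    ⟨by simpa [eq_comm] using (crosses_iff_of_ends rfl).symm.trans (hY _ (.inr ⟨0, rfl⟩)),
      by simpa [eq_comm] using (crosses_iff_of_ends rfl).symm.trans (hY _ (.inr ⟨1, rfl⟩))⟩
  fin_cases i
  · obtain ⟨Y, hY, hbY, hcut⟩ := hf.exists_cut_notMem J.edgesWithin_splice b
    obtain ⟨hac, hbd⟩ := hnew Y hcut
    simp only [Fin.zero_eta, iff_true, Fin.isValue, zero_ne_one, iff_false, not_not] at hac hbd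
    have hv : v ∉ Y ∧ w ∉ Y := ⟨fun h => (hY h).1 rfl, fun h => (hY h).2 rfl⟩
    have hcr : (a ∈ Y ∧ G.Crosses Y ea) ∨ (c ∈ Y ∧ G.Crosses Y ec) := by
      simp only [crosses_iff_of_ends J.ends_ea, crosses_iff_of_ends J.ends_ec, hv]
      tauto
    rcases hcr with ⟨hx, h⟩ | ⟨hx, h⟩ <;> obtain ⟨e, hne, he⟩ := hG.exists_crosses_ne h <;>
      rcases J.eq_of_crosses_of_cut hY hcut he with h | ⟨rfl, h⟩ | ⟨rfl, h⟩ | ⟨rfl, h⟩ | ⟨rfl, h⟩ <;>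
      simp_all
  · obtain ⟨Y, hY, haY, hcut⟩ := hf.exists_cut_notMem J.edgesWithin_splice a
    obtain ⟨hac, hbd⟩ := hnew Y hcut
    simp only [Fin.mk_one, Fin.isValue, one_ne_zero, iff_false, not_not, iff_true] at hac hbd
    have hv : v ∉ Y ∧ w ∉ Y := ⟨fun h => (hY h).1 rfl, fun h => (hY h).2 rfl⟩
    have hcr : (b ∈ Y ∧ G.Crosses Y eb) ∨ (d ∈ Y ∧ G.Crosses Y ed) := by
      simp only [crosses_iff_of_ends J.ends_eb, crosses_iff_of_ends J.ends_ed, hv]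
      tauto
    rcases hcr with ⟨hx, h⟩ | ⟨hx, h⟩ <;> obtain ⟨e, hne, he⟩ := hG.exists_crosses_ne h <;>
      rcases J.eq_of_crosses_of_cut hY hcut he with h | ⟨rfl, h⟩ | ⟨rfl, h⟩ | ⟨rfl, h⟩ | ⟨rfl, h⟩ <;>
      simp_all

theorem exists_isSeparator (J : G.Junction v w a b c d evw ea eb ec ed)
    (hG : G.BridgelessOn Set.univ Set.univ) {f : E ⊕ Fin 2}
    (hf : (G.splice a c b d).IsBridgeOn {x | x ≠ v ∧ x ≠ w} (G.spliceEdges v w) f) :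
    ∃ g S, G.IsSeparator v w a c b d ea ec g S := by
  rcases f with g | i
  · exact ⟨g, J.isSeparator_of_isBridgeOn_inl hG hf⟩
  · exact (J.not_isBridgeOn_inr hG i hf).elim

theorem crosses_or_crosses_of_isSeparator (J : G.Junction v w a b c d evw ea eb ec ed)
    (hG : G.BridgelessOn Set.univ Set.univ) {g₁ g₂ : E} {S T : Set V}
    (hS : G.IsSeparator v w a c b d ea ec g₁ S) (hT : G.IsSeparator v w a d b c ea ed g₂ T)
    {Q : Set V} (hQ : ∀ x ∈ {x | x ≠ v ∧ x ≠ w}, ∀ y ∈ {x | x ≠ v ∧ x ≠ w},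
      (x ∈ S ↔ y ∈ S) → (x ∈ T ↔ y ∈ T) → x ∈ Q → y ∈ Q)
    {e₀ : E} (h₀ : G.Crosses Q e₀)
    (hvw : ∀ e ∈ ({evw, ea, eb, ec, ed} : Set E), G.Crosses Q e → e = e₀) :
    G.Crosses Q g₁ ∨ G.Crosses Q g₂ := by
  obtain ⟨e, hne, he⟩ := hG.exists_crosses_ne h₀
  have hspecial : e ∉ ({evw, ea, eb, ec, ed} : Set E) := fun h => hne (hvw e h he)
  have hv : v ∉ G.ends e := fun h => hspecial <| by
    rcases J.eq_of_left_mem e h with h | h | h <;> simp [h]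
  have hw : w ∉ G.ends e := fun h => hspecial <| by
    rcases J.eq_of_right_mem e h with h | h | h <;> simp [h]
  rcases he.crosses_or_crosses (U := {x | x ≠ v ∧ x ≠ w})
    (fun x hx => ⟨fun h => hv (h ▸ hx), fun h => hw (h ▸ hx)⟩) hQ with h | h
  · rcases hS.eq_of_crosses e h with rfl | rfl | rfl
    · exact .inl he
    all_goals simp at hspecial
  · rcases hT.eq_of_crosses e h with rfl | rfl | rfl
    · exact .inr he
    all_goals simp at hspecial

theorem false_of_isSeparator (J : G.Junction v w a b c d evw ea eb ec ed)
    (hG : G.BridgelessOn Set.univ Set.univ) {g₁ g₂ : E} {S T : Set V}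
    (hS : G.IsSeparator v w a c b d ea ec g₁ S) (hT : G.IsSeparator v w a d b c ea ed g₂ T) :
    False := by
  obtain ⟨p₁, q₁, hg₁, hp₁S, hq₁S, hp₁, hq₁⟩ := hS.exists_ends
  obtain ⟨p₂, q₂, hg₂, hp₂T, hq₂T, hp₂, hq₂⟩ := hT.exists_ends
  have hmem := And.intro (And.intro hS.mem hS.notMem) (And.intro hT.mem hT.notMem)
  have hvw := And.intro hS.notMem_deleted hT.notMem_deleted
  have hne := And.intro J.ne (And.intro (And.intro J.a_ne J.b_ne) (And.intro J.c_ne J.d_ne))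
  have hcr : ∀ Z : Set V, (G.Crosses Z evw ↔ ¬(v ∈ Z ↔ w ∈ Z)) ∧
      (G.Crosses Z ea ↔ ¬(a ∈ Z ↔ v ∈ Z)) ∧ (G.Crosses Z eb ↔ ¬(b ∈ Z ↔ v ∈ Z)) ∧
      (G.Crosses Z ec ↔ ¬(c ∈ Z ↔ w ∈ Z)) ∧ (G.Crosses Z ed ↔ ¬(d ∈ Z ↔ w ∈ Z)) ∧
      (G.Crosses Z g₁ ↔ ¬(p₁ ∈ Z ↔ q₁ ∈ Z)) ∧ (G.Crosses Z g₂ ↔ ¬(p₂ ∈ Z ↔ q₂ ∈ Z)) :=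
    fun Z => ⟨crosses_iff_of_ends J.ends_evw, crosses_iff_of_ends J.ends_ea,
      crosses_iff_of_ends J.ends_eb, crosses_iff_of_ends J.ends_ec, crosses_iff_of_ends J.ends_ed,
      crosses_iff_of_ends hg₁, crosses_iff_of_ends hg₂⟩
  have hA := J.crosses_or_crosses_of_isSeparator hG hS hT (Q := S ∩ T)
    (fun _ _ _ _ hS hT h => ⟨hS.1 h.1, hT.1 h.2⟩) (e₀ := ea)
    (by simp [hcr, hmem, hvw]) (by simp [hcr, hmem, hvw])
  have hB := J.crosses_or_crosses_of_isSeparator hG hS hT (Q := S \ T)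
    (fun _ _ _ _ hS hT h => ⟨hS.1 h.1, mt hT.2 h.2⟩) (e₀ := ec)
    (by simp [hcr, hmem, hvw]) (by simp [hcr, hmem, hvw])
  have hC := J.crosses_or_crosses_of_isSeparator hG hS hT (Q := T \ S)
    (fun _ _ _ _ hS hT h => ⟨hT.1 h.1, mt hS.2 h.2⟩) (e₀ := ed)
    (by simp [hcr, hmem, hvw]) (by simp [hcr, hmem, hvw])
  have hD := J.crosses_or_crosses_of_isSeparator hG hS hT
    (Q := {x | x ≠ v ∧ x ≠ w ∧ x ∉ S ∧ x ∉ T})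
    (fun _ _ _ hy hS hT h => ⟨hy.1, hy.2, mt hS.2 h.2.2.1, mt hT.2 h.2.2.2⟩) (e₀ := eb)
    (by simp [hcr, hmem, hvw, hne]) (by simp [hcr, hmem, hvw, hne])
  have hX := J.crosses_or_crosses_of_isSeparator hG hS hT
    (Q := {x | x ≠ w ∧ (x ∈ S ↔ x ∈ T)})
    (fun _ _ _ hy hS hT h => ⟨hy.2, hS.symm.trans (h.2.trans hT)⟩) (e₀ := evw)
    (by simp [hcr, hvw, hne]) (by simp [hcr, hmem, hvw, hne])
  simp [hcr, hp₁S, hq₁S, hp₂T, hq₂T, hp₁, hq₁, hp₂, hq₂] at hA hB hC hD hX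
  clear * - hA hB hC hD hX
  tauto

end Junction

end Multigraph

theorem frink_general {V E : Type} [Fintype E] (G : Multigraph V E)
    (hcubic : G.CubicOn Set.univ Set.univ)
    (hbridgeless : G.BridgelessOn Set.univ Set.univ)
    (v w a b c d : V) (evw ea eb ec ed : E)
    (hvw : v ≠ w)
    (hevw : G.ends evw = s(v, w))
    (hsingle : ∀ e : E, G.ends e = s(v, w) → e = evw)
    (hea : G.ends ea = s(a, v)) (heb : G.ends eb = s(b, v))
    (hec : G.ends ec = s(c, w)) (hed : G.ends ed = s(d, w))
    (hab : ea ≠ eb) (hcd : ec ≠ ed)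
    (ha : ea ≠ evw) (hb : eb ≠ evw) (hc : ec ≠ evw) (hd : ed ≠ evw) :
    let H1 : Multigraph V (E ⊕ Fin 2) := ⟨Sum.elim G.ends ![s(a, c), s(b, d)]⟩
    let H2 : Multigraph V (E ⊕ Fin 2) := ⟨Sum.elim G.ends ![s(a, d), s(b, c)]⟩
    let VS : Set V := {x | x ≠ v ∧ x ≠ w}
    let ES : Set (E ⊕ Fin 2) :=
      Sum.inl '' {e | e ∉ ({evw, ea, eb, ec, ed} : Set E)} ∪ Set.range Sum.inr
    (H1.CubicOn VS ES ∧ H2.CubicOn VS ES) ∧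
      (H1.BridgelessOn VS ES ∨ H2.BridgelessOn VS ES) := by
  intro H1 H2 VS ES
  have J := Multigraph.Junction.of_cubicOn hcubic hvw hevw hsingle hea heb hec hed hab hcd
    ha hb hc hd
  have hES : ES = G.spliceEdges v w := J.spliceEdges_eq.symm
  rw [hES]
  refine ⟨⟨J.cubicOn_splice hcubic, J.swap.cubicOn_splice hcubic⟩,
    or_iff_not_imp_left.2 fun h₁ f₂ hf₂ => ?_⟩
  obtain ⟨f₁, hf₁⟩ := not_forall_not.1 h₁
  obtain ⟨g₁, S, hS⟩ := J.exists_isSeparator hbridgeless hf₁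
  obtain ⟨g₂, T, hT⟩ := J.swap.exists_isSeparator hbridgeless hf₂
  exact J.false_of_isSeparator hbridgeless hS hT

/-- **Frink's theorem.** Let `G` be a connected bridgeless cubic multigraph and
`{v,w}` a single edge of `G` with other incident edges `{a,v}`, `{b,v}`,
`{c,w}`, `{d,w}`. Let `H1` be obtained from `G` by deleting `v` and `w` with
all incident edges and adding the two new edges `{a,c}` and `{b,d}`, and `H2`
likewise with new edges `{a,d}` and `{b,c}`. Then both `H1` and `H2` are
cubic, and at least one of them is bridgeless. -/
theorem frink {V E : Type} [Fintype V] [Fintype E] (G : Multigraph V E)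
    (hconn : G.ConnectedOn Set.univ Set.univ)
    (hcubic : G.CubicOn Set.univ Set.univ)
    (hbridgeless : G.BridgelessOn Set.univ Set.univ)
    (v w a b c d : V) (evw ea eb ec ed : E)
    (hvw : v ≠ w)
    (hevw : G.ends evw = s(v, w))
    (hsingle : ∀ e : E, G.ends e = s(v, w) → e = evw)
    (hea : G.ends ea = s(a, v)) (heb : G.ends eb = s(b, v))
    (hec : G.ends ec = s(c, w)) (hed : G.ends ed = s(d, w))
    (hab : ea ≠ eb) (hcd : ec ≠ ed)
    (ha : ea ≠ evw) (hb : eb ≠ evw) (hc : ec ≠ evw) (hd : ed ≠ evw) :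
    let H1 : Multigraph V (E ⊕ Fin 2) := ⟨Sum.elim G.ends ![s(a, c), s(b, d)]⟩
    let H2 : Multigraph V (E ⊕ Fin 2) := ⟨Sum.elim G.ends ![s(a, d), s(b, c)]⟩
    let VS : Set V := {x | x ≠ v ∧ x ≠ w}
    let ES : Set (E ⊕ Fin 2) :=
      Sum.inl '' {e | e ∉ ({evw, ea, eb, ec, ed} : Set E)} ∪ Set.range Sum.inr
    (H1.CubicOn VS ES ∧ H2.CubicOn VS ES) ∧
      (H1.BridgelessOn VS ES ∨ H2.BridgelessOn VS ES) :=
  frink_general G hcubic hbridgeless v w a b c d evw ea eb ec ed hvw hevw hsingle hea heb hec hed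
    hab hcd ha hb hc hd
end

section
/- Every bridgeless cubic multigraph with more than two vertices has a single edge, i.e., a pair of adjacent vertices v,w joined by exactly one edge. -/
/-! If no edge is single, a loop is impossible: it counts twice towards the degree `3`, so the
vertex carries exactly one further edge, and that edge is single. Without loops, every neighbour
of a vertex `v` is joined to it by at least two of its three edges, so `v` has a unique neighbour
`w`, joined to it by a triple edge. Then `{v, w}` is closed under walks, so by connectivity it is
the whole vertex set, contradicting `2 < |V|`. -/

namespace Multigraph

open Set

variable {V E : Type} (G : Multigraph V E)

lemma degOn_univ (v : V) :
    G.degOn univ v = {e | v ∈ G.ends e}.ncard + {e | G.ends e = s(v, v)}.ncard := by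
  simp only [degOn, sep_univ]

lemma exists_mem_ends_of_degOn_ne_zero {v : V} (hv : G.degOn univ v ≠ 0) :
    ∃ e, v ∈ G.ends e := by
  by_contra! h
  have hloop : ∀ e, G.ends e ≠ s(v, v) := fun e he => h e (he ▸ Sym2.mem_mk_left v v)
  simp [degOn_univ, h, hloop] at hv

lemma exists_single_edge_of_loop [Finite E] {v : V} (hv : G.degOn univ v = 3) {l : E}
    (hl : G.ends l = s(v, v)) :
    ∃ w f, v ≠ w ∧ G.ends f = s(v, w) ∧ ∀ f', G.ends f' = s(v, w) → f' = f := by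
  rw [degOn_univ] at hv
  set I := {e | v ∈ G.ends e}
  set L := {e | G.ends e = s(v, v)}
  have hLI : L ⊆ I := fun e (he : G.ends e = _) => show v ∈ _ from he ▸ Sym2.mem_mk_left v v
  have hL_pos : 0 < L.ncard := (ncard_pos (toFinite L)).mpr ⟨l, hl⟩
  have hLI_card := ncard_le_ncard hLI (toFinite I)
  obtain ⟨f, hf⟩ : ∃ f, I \ {l} = {f} := by
    rw [← ncard_eq_one, ncard_sdiff_singleton_of_mem (hLI hl)]
    omega
  have hfI : f ∈ I := (hf ▸ mem_singleton f : f ∈ I \ {l}).1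
  have hfl : f ≠ l := (hf ▸ mem_singleton f : f ∈ I \ {l}).2
  have hfL : f ∉ L := fun hfL => hfl ((ncard_le_one_iff (toFinite L)).mp (by omega) hfL hl)
  obtain ⟨w, hw⟩ := Sym2.mem_iff_exists.mp hfI
  have hvw : v ≠ w := by
    rintro rfl
    exact hfL hw
  refine ⟨w, f, hvw, hw, fun f' hf' => ?_⟩
  have hf'l : f' ≠ l := by
    rintro rfl
    exact hvw (Sym2.congr_right.mp (hf'.symm.trans hl)).symm
  have : f' ∈ I \ {l} := ⟨show v ∈ G.ends f' from hf' ▸ Sym2.mem_mk_left v w, hf'l⟩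
  simpa [hf] using this

lemma ends_eq_of_forall_not_single [Finite E] {v : V} (hv : G.degOn univ v = 3)
    (hpar : ∀ w f, v ≠ w → G.ends f = s(v, w) → ∃ f', G.ends f' = s(v, w) ∧ f' ≠ f)
    {f g : E} (hf : v ∈ G.ends f) (hg : v ∈ G.ends g) : G.ends f = G.ends g := by
  have hnoloop : ∀ e, G.ends e ≠ s(v, v) := by
    intro l hl
    obtain ⟨w, f, hvw, hf, hsingle⟩ := G.exists_single_edge_of_loop hv hl
    obtain ⟨f', hf', hf'f⟩ := hpar w f hvw hf
    exact hf'f (hsingle f' hf')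
  have hI : {e | v ∈ G.ends e}.ncard = 3 := by
    simpa [degOn_univ, hnoloop] using hv
  have two_le_parallel : ∀ e, v ∈ G.ends e → 2 ≤ {e' | G.ends e' = G.ends e}.ncard := by
    intro e he
    obtain ⟨w, hw⟩ := Sym2.mem_iff_exists.mp he
    have hvw : v ≠ w := by
      rintro rfl
      exact hnoloop e hw
    obtain ⟨e', he', he'e⟩ := hpar w e hvw hw
    exact (one_lt_ncard_iff (toFinite _)).mpr ⟨e', e, he'.trans hw.symm, rfl, he'e⟩
  have parallel_subset : ∀ e, v ∈ G.ends e → {e' | G.ends e' = G.ends e} ⊆ {e | v ∈ G.ends e} :=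
    fun e he e' (he' : G.ends e' = _) => show v ∈ _ from he' ▸ he
  by_contra hfg
  have hdisj : Disjoint {e' | G.ends e' = G.ends f} {e' | G.ends e' = G.ends g} :=
    disjoint_left.mpr fun e' (hf' : G.ends e' = _) (hg' : G.ends e' = _) => hfg (hf'.symm.trans hg')
  have := ncard_le_ncard (union_subset (parallel_subset f hf) (parallel_subset g hg))
    (toFinite {e | v ∈ G.ends e})
  rw [ncard_union_eq hdisj (toFinite _) (toFinite _), hI] at this
  linarith [two_le_parallel f hf, two_le_parallel g hg]

lemma mem_ends_of_linkedOn_univ {e : E}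
    (hclosed : ∀ x ∈ G.ends e, ∀ f, x ∈ G.ends f → G.ends f = G.ends e) {x z : V}
    (hx : x ∈ G.ends e) (h : G.LinkedOn univ x z) : z ∈ G.ends e := by
  induction h with
  | refl => exact hx
  | tail _ hstep ih =>
    obtain ⟨f, -, hf⟩ := hstep
    rw [← hclosed _ ih f (hf ▸ Sym2.mem_mk_left _ _), hf]
    exact Sym2.mem_mk_right _ _

end Multigraph

lemma Fintype.card_le_two_of_forall_mem_sym2 {V : Type} [Fintype V] {z : Sym2 V}
    (h : ∀ x, x ∈ z) : Fintype.card V ≤ 2 := by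
  induction z using Sym2.ind with
  | _ a b =>
  calc Fintype.card V = (Set.univ : Set V).ncard := by simp
    _ ≤ ({a, b} : Set V).ncard := Set.ncard_le_ncard (fun x _ => by simpa using h x)
    _ ≤ 2 := (Set.ncard_insert_le a {b}).trans (by simp)

theorem exists_single_edge_general {V E : Type} [Fintype V] [Fintype E] (G : Multigraph V E)
    (hconn : G.ConnectedOn Set.univ Set.univ)
    (hcubic : G.CubicOn Set.univ Set.univ)
    (hcard : 2 < Fintype.card V) :
    ∃ (v w : V) (e : E), v ≠ w ∧ G.ends e = s(v, w) ∧
      ∀ e' : E, G.ends e' = s(v, w) → e' = e := by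
  by_contra! hno
  obtain ⟨v⟩ : Nonempty V := Fintype.card_pos_iff.mp (by omega)
  obtain ⟨e, he⟩ := G.exists_mem_ends_of_degOn_ne_zero (v := v) (by simp [hcubic.2 v trivial])
  have hclosed : ∀ x ∈ G.ends e, ∀ f, x ∈ G.ends f → G.ends f = G.ends e :=
    fun x hx f hf => G.ends_eq_of_forall_not_single (hcubic.2 x trivial) (hno x) hf hx
  have hall : ∀ z, z ∈ G.ends e :=
    fun z => G.mem_ends_of_linkedOn_univ hclosed he (hconn.2 v trivial z trivial)
  exact hcard.not_ge (Fintype.card_le_two_of_forall_mem_sym2 hall)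

/-- Every (connected) bridgeless cubic multigraph with more than two vertices
has a single edge: a pair of adjacent vertices `v ≠ w` joined by exactly one
edge. -/
theorem exists_single_edge {V E : Type} [Fintype V] [Fintype E] (G : Multigraph V E)
    (hconn : G.ConnectedOn Set.univ Set.univ)
    (hcubic : G.CubicOn Set.univ Set.univ)
    (hbridgeless : G.BridgelessOn Set.univ Set.univ)
    (hcard : 2 < Fintype.card V) :
    ∃ (v w : V) (e : E), v ≠ w ∧ G.ends e = s(v, w) ∧
      ∀ e' : E, G.ends e' = s(v, w) → e' = e :=
  exists_single_edge_general G hconn hcubic hcard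
end

section
/- Let T be a spanning tree of a connected multigraph G, e ∈ E(T), and e' a non-tree edge covering e in T; let T' = (T\e) ∪ e'. Let f be an edge of T with f ≠ e, and suppose a non-tree edge f' ≠ e' covers f in T. Then f' covers f in T', unless f lies on the path P in T between the endpoints of e'. Moreover, every edge of (P \ e) ∪ e' is covered by e in T'. -/
/-!
Removing a tree edge `f` splits `T` into two components, and `g` covers `f` exactly when the ends
of `g` lie in different ones. If the ends of `e'` lie in the same component of `T \ f`, adding
`e'` merges nothing, so whatever `f'` separated in `T` stays separated in `T'`. If instead `e'`
covers `g`, a walk in `T' \ g` between the ends `x, y` of `e` has to cross `e'`; since `x` and `y`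
are separated already in `T \ e`, it runs from `x` to one end of `e'` and from the other end to
`y`, and closing it up with `e` joins the ends of `e'` in `T \ g`.
-/

namespace Multigraph

variable {V E : Type} {G : Multigraph V E} {S T : Set E} {x y : V}

lemma exists_ends_eq (e : E) : ∃ x y, G.ends e = s(x, y) := by
  obtain ⟨⟨x, y⟩, h⟩ := Quot.exists_rep (G.ends e)
  exact ⟨x, y, h.symm⟩

lemma Step.symm (h : G.Step S x y) : G.Step S y x := by
  obtain ⟨f, hf, hends⟩ := h
  exact ⟨f, hf, by rw [hends, Sym2.eq_swap]⟩

lemma LinkedOn.symm (h : G.LinkedOn S x y) : G.LinkedOn S y x :=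
  Relation.ReflTransGen.mono (fun _ _ ↦ Step.symm) _ _ (Relation.reflTransGen_swap.mpr h)

lemma LinkedOn.mono (hST : S ⊆ T) (h : G.LinkedOn S x y) : G.LinkedOn T x y :=
  Relation.ReflTransGen.mono (fun _ _ ⟨f, hf, hends⟩ ↦ ⟨f, hST hf, hends⟩) _ _ h

lemma LinkedOn.of_insert {h : E} {a b : V} (hxy : G.LinkedOn (insert h S) x y)
    (hends : G.ends h = s(a, b)) (hab : G.LinkedOn S a b) : G.LinkedOn S x y := by
  refine Relation.ReflTransGen.lift' id (fun u v ⟨k, hk, hkends⟩ ↦ ?_) _ _ hxy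
  rcases hk with rfl | hk
  · rcases Sym2.eq_iff.mp (hkends.symm.trans hends) with ⟨rfl, rfl⟩ | ⟨rfl, rfl⟩
    exacts [hab, hab.symm]
  · exact .single ⟨k, hk, hkends⟩

lemma LinkedOn.insert_cases {h : E} (hxy : G.LinkedOn (insert h S) x y) :
    G.LinkedOn S x y ∨
      (∃ z ∈ G.ends h, G.LinkedOn S x z) ∧ ∃ z ∈ G.ends h, G.LinkedOn S z y := by
  induction hxy with
  | refl => exact .inl .refl
  | @tail u v _ huv ih =>
    obtain ⟨k, hk | hk, hkends⟩ := huv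
    · subst hk
      have hv : v ∈ G.ends k := hkends ▸ Sym2.mem_mk_right u v
      refine .inr ⟨?_, v, hv, .refl⟩
      rcases ih with hxu | ⟨hx, -⟩
      · exact ⟨u, hkends ▸ Sym2.mem_mk_left u v, hxu⟩
      · exact hx
    · rcases ih with hxu | ⟨hx, z, hz, hzu⟩
      · exact .inl (hxu.tail ⟨k, hk, hkends⟩)
      · exact .inr ⟨hx, z, hz, hzu.tail ⟨k, hk, hkends⟩⟩

lemma IsSpanningTreeOn.not_linkedOn_diff {VS : Set V} {ES : Set E}
    (hT : G.IsSpanningTreeOn VS ES T) {f : E} (hf : f ∈ T) (hends : G.ends f = s(x, y)) :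
    ¬ G.LinkedOn (T \ {f}) x y := by
  refine fun hxy ↦ hT.2.2 f hf ⟨fun g hg ↦ hT.2.1.1 g hg.1, fun u hu v hv ↦ ?_⟩
  exact ((hT.2.1.2 u hu v hv).mono (by simp)).of_insert hends hxy

variable {e e' f f' : E}

lemma Covers.swap_of_not_covers (hf : G.Covers T f' f) (hfe : f ≠ e) (hf'e' : f' ≠ e')
    (he' : e' ∉ T) (hnc : ¬ G.Covers T e' f) : G.Covers ((T \ {e}) ∪ {e'}) f' f := by
  obtain ⟨hfT, hf'T, c, d, hcd, hncd⟩ := hf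
  obtain ⟨a, b, hab⟩ := G.exists_ends_eq e'
  have hlink : G.LinkedOn (T \ {f}) a b := by
    by_contra h
    exact hnc ⟨hfT, he', a, b, hab, h⟩
  have hsub : ((T \ {e}) ∪ {e'}) \ {f} ⊆ insert e' (T \ {f}) := by
    rintro k ⟨⟨hkT, -⟩ | rfl, hkf⟩
    exacts [.inr ⟨hkT, hkf⟩, .inl rfl]
  refine ⟨.inl ⟨hfT, hfe⟩, by simp [hf'T, hf'e'], c, d, hcd, fun hcd' ↦ hncd ?_⟩
  exact (hcd'.mono hsub).of_insert hab hlink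

lemma Covers.swap_of_covers {VS : Set V} {ES : Set E} {g : E}
    (hT : G.IsSpanningTreeOn VS ES T) (hcov : G.Covers T e' e) (hg : G.Covers T e' g)
    (hge : g ≠ e) : G.Covers ((T \ {e}) ∪ {e'}) e g := by
  obtain ⟨heT, he', -⟩ := hcov
  obtain ⟨hgT, -, a, b, hab, hnab⟩ := hg
  obtain ⟨x, y, hxy⟩ := G.exists_ends_eq e
  have hee' : e ≠ e' := fun h ↦ he' (h ▸ heT)
  refine ⟨.inl ⟨hgT, hge⟩, by simp [hee'], x, y, hxy, fun hlink ↦ ?_⟩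
  have hsub : ((T \ {e}) ∪ {e'}) \ {g} ⊆ insert e' ((T \ {e}) \ {g}) := by
    rintro k ⟨hk | rfl, hkg⟩
    exacts [.inr ⟨hk, hkg⟩, .inl rfl]
  have hnxy : ¬ G.LinkedOn ((T \ {e}) \ {g}) x y :=
    fun h ↦ hT.not_linkedOn_diff heT hxy (h.mono Set.sdiff_subset)
  have hmono : (T \ {e}) \ {g} ⊆ T \ {g} := Set.sdiff_subset_sdiff_left Set.sdiff_subset
  have hxy_g : G.LinkedOn (T \ {g}) x y := .single ⟨e, ⟨heT, hge.symm⟩, hxy⟩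
  rcases (hlink.mono hsub).insert_cases with h | ⟨⟨z, hz, hxz⟩, w, hw, hwy⟩
  · exact hnxy h
  by_cases hzw : z = w
  · exact hnxy (hxz.trans (hzw ▸ hwy))
  have hzw_g : G.LinkedOn (T \ {g}) z w :=
    (hxz.mono hmono).symm.trans (hxy_g.trans (hwy.mono hmono).symm)
  rw [hab, Sym2.mem_iff] at hz hw
  rcases hz with rfl | rfl <;> rcases hw with rfl | rfl
  exacts [hzw rfl, hnab hzw_g, hnab hzw_g.symm, hzw rfl]

lemma Covers.swap {VS : Set V} {ES : Set E} (hT : G.IsSpanningTreeOn VS ES T)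
    (hcov : G.Covers T e' e) : G.Covers ((T \ {e}) ∪ {e'}) e e' := by
  obtain ⟨heT, he', -⟩ := hcov
  obtain ⟨x, y, hxy⟩ := G.exists_ends_eq e
  have hee' : e ≠ e' := fun h ↦ he' (h ▸ heT)
  have hsub : ((T \ {e}) ∪ {e'}) \ {e'} ⊆ T \ {e} := by
    rintro k ⟨hk | rfl, hke'⟩
    exacts [hk, absurd rfl hke']
  exact ⟨.inr rfl, by simp [hee'], x, y, hxy,
    fun h ↦ hT.not_linkedOn_diff heT hxy (h.mono hsub)⟩

end Multigraph

theorem swap_maintains_cover_invariant_general {V E : Type} (G : Multigraph V E)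
    (T : Set E) (hT : G.IsSpanningTreeOn Set.univ Set.univ T)
    (e e' : E) (hcov : G.Covers T e' e) :
    (∀ f f' : E, f ≠ e → f' ≠ e' → G.Covers T f' f → ¬ G.Covers T e' f →
      G.Covers ((T \ {e}) ∪ {e'}) f' f) ∧
    (∀ g : E, g ≠ e → G.Covers T e' g → G.Covers ((T \ {e}) ∪ {e'}) e g) ∧
    G.Covers ((T \ {e}) ∪ {e'}) e e' :=
  ⟨fun _ _ hfe hf'e' hf hnc ↦ hf.swap_of_not_covers hfe hf'e' hcov.2.1 hnc,
    fun _ hge hg ↦ hcov.swap_of_covers hT hg hge, hcov.swap hT⟩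

/-- The swap operation maintains the cover invariant. Let `T` be a spanning
tree of a connected multigraph `G`, `e ∈ E(T)`, `e'` a non-tree edge covering
`e` in `T`, and `T' = (T \ e) ∪ e'`. If a non-tree edge `f' ≠ e'` covers an
edge `f ≠ e` of `T` in `T`, then `f'` covers `f` in `T'`, unless `f` lies on
the path `P` in `T` between the endpoints of `e'` (i.e. unless `e'` covers `f`
in `T`). Moreover, every edge of `(P \ e) ∪ e'` is covered by `e` in `T'`. -/
theorem swap_maintains_cover_invariant {V E : Type} (G : Multigraph V E)
    (hconn : G.ConnectedOn Set.univ Set.univ)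
    (T : Set E) (hT : G.IsSpanningTreeOn Set.univ Set.univ T)
    (e e' : E) (hcov : G.Covers T e' e) :
    (∀ f f' : E, f ≠ e → f' ≠ e' → G.Covers T f' f → ¬ G.Covers T e' f →
      G.Covers ((T \ {e}) ∪ {e'}) f' f) ∧
    (∀ g : E, g ≠ e → G.Covers T e' g → G.Covers ((T \ {e}) ∪ {e'}) e g) ∧
    G.Covers ((T \ {e}) ∪ {e'}) e e' :=
  swap_maintains_cover_invariant_general G T hT e e' hcov
end

section
/- Let T be a tree and a, b, c, d four (not necessarily distinct) vertices of T. Then {a,b,c,d} can be partitioned into two pairs {x,y} and {x',y'} such that the path in T from x to y and the path in T from x' to y' are edge-disjoint. -/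
/-!
Choose the pairing of minimal total distance. In a tree the path between two vertices is a
geodesic, so if the two paths of a pairing shared an edge `uv`, cutting both paths at `uv` and
reconnecting the four ends through `u` and through `v` would give another pairing whose total
distance is smaller by at least `2`.
-/

namespace SimpleGraph

variable {V : Type*} {G : SimpleGraph V}

namespace Walk

theorem dist_add_dist_add_two_le_of_isSubwalk {a b c d u v : V} {p : G.Walk a b}
    {q : G.Walk c d} (h : G.Adj u v) (hp : h.toWalk.IsSubwalk p) (hq : h.toWalk.IsSubwalk q) :
    G.dist a c + G.dist b d + 2 ≤ p.length + q.length := by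
  obtain ⟨pu, pv, rfl⟩ := hp
  obtain ⟨qu, qv, rfl⟩ := hq
  have hac := dist_le (pu.append qu.reverse)
  have hbd := dist_le (pv.reverse.append qv)
  simp only [length_append, length_reverse, h.length_toWalk] at hac hbd ⊢
  omega

theorem dist_add_dist_add_two_le_of_isSubwalk_symm {a b c d u v : V} {p : G.Walk a b}
    {q : G.Walk c d} (h : G.Adj u v) (hp : h.toWalk.IsSubwalk p)
    (hq : h.symm.toWalk.IsSubwalk q) :
    G.dist a d + G.dist b c + 2 ≤ p.length + q.length := by
  obtain ⟨pu, pv, rfl⟩ := hp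
  obtain ⟨qv, qu, rfl⟩ := hq
  have had := dist_le (pu.append qu)
  have hbc := dist_le (pv.reverse.append qv.reverse)
  simp only [length_append, length_reverse, h.length_toWalk, h.symm.length_toWalk] at had hbc ⊢
  omega

theorem dist_add_dist_add_two_le_of_mem_edges {a b c d : V} {p : G.Walk a b} {q : G.Walk c d}
    {e : Sym2 V} (hp : e ∈ p.edges) (hq : e ∈ q.edges) :
    G.dist a c + G.dist b d + 2 ≤ p.length + q.length ∨
      G.dist a d + G.dist b c + 2 ≤ p.length + q.length := by
  induction e using Sym2.ind with
  | _ u v =>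
  have h : G.Adj u v := p.adj_of_mem_edges hp
  rw [← isSubwalk_toWalk_iff_mem_edges h] at hp hq
  rcases hp with hp | hp <;> rcases hq with hq | hq
  · exact .inl (dist_add_dist_add_two_le_of_isSubwalk h hp hq)
  · exact .inr (dist_add_dist_add_two_le_of_isSubwalk_symm h hp hq)
  · exact .inr (dist_add_dist_add_two_le_of_isSubwalk_symm h.symm hp hq)
  · exact .inl (dist_add_dist_add_two_le_of_isSubwalk h.symm hp hq)

end Walk

theorem IsAcyclic.length_eq_dist_of_isPath (hG : G.IsAcyclic) {a b : V} {p : G.Walk a b}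
    (hp : p.IsPath) : p.length = G.dist a b := by
  obtain ⟨q, hq, hlen⟩ := p.reachable.exists_path_of_dist
  have : (⟨p, hp⟩ : G.Path a b) = ⟨q, hq⟩ := (hG.subsingleton_path a b).elim _ _
  rw [← hlen, show p = q from congrArg Subtype.val this]

theorem IsAcyclic.dist_add_dist_add_two_le_of_mem_edges (hG : G.IsAcyclic) {a b c d : V}
    {p : G.Walk a b} {q : G.Walk c d} (hp : p.IsPath) (hq : q.IsPath) {e : Sym2 V}
    (hep : e ∈ p.edges) (heq : e ∈ q.edges) :
    G.dist a c + G.dist b d + 2 ≤ G.dist a b + G.dist c d ∨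
      G.dist a d + G.dist b c + 2 ≤ G.dist a b + G.dist c d := by
  rw [← hG.length_eq_dist_of_isPath hp, ← hG.length_eq_dist_of_isPath hq]
  exact Walk.dist_add_dist_add_two_le_of_mem_edges hep heq

end SimpleGraph

open SimpleGraph

/-- Let `T` be a tree and `a, b, c, d` four (not necessarily distinct)
vertices of `T`. Then `{a,b,c,d}` can be partitioned into two pairs `{x,y}`
and `{x',y'}` such that the path in `T` from `x` to `y` and the path in `T`
from `x'` to `y'` are edge-disjoint. -/
theorem exists_edge_disjoint_pairing {V : Type} (T : SimpleGraph V) (hT : T.IsTree)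
    (a b c d : V) :
    (∀ (p : T.Walk a b) (q : T.Walk c d), p.IsPath → q.IsPath →
      ∀ e, e ∈ p.edges → e ∉ q.edges) ∨
    (∀ (p : T.Walk a c) (q : T.Walk b d), p.IsPath → q.IsPath →
      ∀ e, e ∈ p.edges → e ∉ q.edges) ∨
    (∀ (p : T.Walk a d) (q : T.Walk b c), p.IsPath → q.IsPath →
      ∀ e, e ∈ p.edges → e ∉ q.edges) := by
  by_contra! h
  obtain ⟨⟨_, _, hp₁, hq₁, _, he₁p, he₁q⟩, ⟨_, _, hp₂, hq₂, _, he₂p, he₂q⟩,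
    ⟨_, _, hp₃, hq₃, _, he₃p, he₃q⟩⟩ := h
  have h₁ := hT.isAcyclic.dist_add_dist_add_two_le_of_mem_edges hp₁ hq₁ he₁p he₁q
  have h₂ := hT.isAcyclic.dist_add_dist_add_two_le_of_mem_edges hp₂ hq₂ he₂p he₂q
  have h₃ := hT.isAcyclic.dist_add_dist_add_two_le_of_mem_edges hp₃ hq₃ he₃p he₃q
  have hbc : T.dist c b = T.dist b c := dist_comm
  have hbd : T.dist d b = T.dist b d := dist_comm
  have hcd : T.dist d c = T.dist c d := dist_comm
  omega
end

section
/- Let T be a tree and a,b,c,d vertices of T. Among the three pairings {{a,b},{c,d}}, {{a,c},{b,d}}, {{a,d},{b,c}}, a pairing with the minimum total length of the two connecting paths in T has edge-disjoint paths. -/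
open SimpleGraph

private lemma path_len_eq_dist {V : Type} {T : SimpleGraph V} (hT : T.IsTree) {x y : V}
    (p : T.Walk x y) (hp : p.IsPath) : p.length = T.dist x y := by
  obtain ⟨q, hq, hql⟩ := (hT.isConnected x y).exists_path_of_dist
  rw [← hql]
  exact congrArg _ ((hT.existsUnique_path x y).unique hp hq)

private lemma dart_split {V : Type} {T : SimpleGraph V} (hconn : T.Connected) {x y : V}
    (p : T.Walk x y) (d : T.Dart) (hd : d ∈ p.darts) :
    T.dist x d.fst + 1 + T.dist d.snd y ≤ p.length := by
  induction p with
  | nil => simp at hd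
  | cons h q ih =>
    rename_i u v w
    simp only [SimpleGraph.Walk.darts_cons, List.mem_cons] at hd
    rcases hd with hd | hd
    · subst hd
      simp only [SimpleGraph.Walk.length_cons]
      have : T.dist u u = 0 := by simp
      have h2 := SimpleGraph.dist_le q
      omega
    · have h1 := ih hd
      have h2 : T.dist u d.fst ≤ T.dist u v + T.dist v d.fst := hconn.dist_triangle
      have h3 : T.dist u v ≤ 1 := by
        have : T.dist u v = 1 := SimpleGraph.dist_eq_one_iff_adj.mpr h
        omega
      simp only [SimpleGraph.Walk.length_cons]
      omega

/-- Let `T` be a tree and `a, b, c, d` vertices of `T`. Among the three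
pairings `{{a,b},{c,d}}`, `{{a,c},{b,d}}`, `{{a,d},{b,c}}`, a pairing with the
minimum total length of the two connecting paths in `T` has edge-disjoint
paths. -/
theorem min_pairing_edge_disjoint {V : Type} (T : SimpleGraph V) (hT : T.IsTree)
    (a b c d : V)
    (pab : T.Walk a b) (pcd : T.Walk c d)
    (pac : T.Walk a c) (pbd : T.Walk b d)
    (pad : T.Walk a d) (pbc : T.Walk b c)
    (hab : pab.IsPath) (hcd : pcd.IsPath)
    (hac : pac.IsPath) (hbd : pbd.IsPath)
    (had : pad.IsPath) (hbc : pbc.IsPath)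
    (hmin1 : pab.length + pcd.length ≤ pac.length + pbd.length)
    (hmin2 : pab.length + pcd.length ≤ pad.length + pbc.length) :
    ∀ e, e ∈ pab.edges → e ∉ pcd.edges := by
  intro e he1 he2
  have hconn : T.Connected := hT.isConnected
  rw [SimpleGraph.Walk.edges, List.mem_map] at he1 he2
  obtain ⟨d1, hd1, hd1e⟩ := he1
  obtain ⟨d2, hd2, hd2e⟩ := he2
  have hsplit1 := dart_split hconn pab d1 hd1
  have hsplit2 := dart_split hconn pcd d2 hd2
  have hedge : d1.edge = d2.edge := hd1e.trans hd2e.symm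
  rw [SimpleGraph.dart_edge_eq_iff] at hedge
  rw [path_len_eq_dist hT pac hac, path_len_eq_dist hT pbd hbd] at hmin1
  rw [path_len_eq_dist hT pad had, path_len_eq_dist hT pbc hbc] at hmin2
  set u := d1.fst with hu
  set v := d1.snd with hv
  rcases hedge with h12 | h12
  · -- d2 = d1 : same orientation, pcd splits as c..u, v..d
    have h2 : T.dist c u + 1 + T.dist v d ≤ pcd.length := by
      rw [← h12] at hsplit2; exact hsplit2
    have hac' : T.dist a c ≤ T.dist a u + T.dist u c := hconn.dist_triangle
    have hbd' : T.dist b d ≤ T.dist b v + T.dist v d := hconn.dist_triangle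
    have e1 : T.dist u c = T.dist c u := SimpleGraph.dist_comm
    have e2 : T.dist b v = T.dist v b := SimpleGraph.dist_comm
    omega
  · -- d2 = d1.symm : pcd splits as c..v, u..d
    have h2 : T.dist c v + 1 + T.dist u d ≤ pcd.length := by
      have h13 : d2 = d1.symm := by
        have := congrArg SimpleGraph.Dart.symm h12
        simpa using this.symm
      rw [h13] at hsplit2
      simpa [SimpleGraph.Dart.symm] using hsplit2
    have had' : T.dist a d ≤ T.dist a u + T.dist u d := hconn.dist_triangle
    have hbc' : T.dist b c ≤ T.dist b v + T.dist v c := hconn.dist_triangle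
    have e1 : T.dist v c = T.dist c v := SimpleGraph.dist_comm
    have e2 : T.dist b v = T.dist v b := SimpleGraph.dist_comm
    omega
end

section
/- Let M be a perfect matching of a cubic graph G. Then the edge set of G can be partitioned into paths of length exactly 3 (a P4-decomposition). -/
namespace Multigraph

/-- `P` is a path with exactly `3` edges (a `P4`). -/
def IsP4 {V E : Type} (G : Multigraph V E) (P : Set E) : Prop :=
  ∃ (v0 v1 v2 v3 : V) (e1 e2 e3 : E),
    v0 ≠ v1 ∧ v0 ≠ v2 ∧ v0 ≠ v3 ∧ v1 ≠ v2 ∧ v1 ≠ v3 ∧ v2 ≠ v3 ∧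
    e1 ≠ e2 ∧ e1 ≠ e3 ∧ e2 ≠ e3 ∧
    P = {e1, e2, e3} ∧
    G.ends e1 = s(v0, v1) ∧ G.ends e2 = s(v1, v2) ∧ G.ends e3 = s(v2, v3)

end Multigraph

/-!
Removing the perfect matching `M` leaves a 2-factor. Orient each of its cycles, so that every
vertex `v` has exactly one out-edge `out v` and every edge of the 2-factor is the out-edge of
exactly one of its ends. For a matching edge `uw`, the edges `out u`, `uw`, `out w` then form a
path of length three (the far ends differ because a vertex has only one in-edge), and these paths
partition the edges.

The orientation is a set of darts (incidences of the 2-factor) meeting every edge and every vertex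
in exactly one dart, i.e. a common transversal of the two fixed-point-free involutions "reverse
along the edge" `a` and "turn to the other edge at the vertex" `b`. It exists because `a` maps no
orbit of `a * b` to itself (`(a * b) ^ k x = a x` would force `a` or `b` to fix a point of that
orbit), so `a` pairs off the orbits and one may keep one orbit of each pair.
-/
theorem Function.Involutive.exists_set_apply_mem_iff_notMem {Y : Type*} {g : Y → Y}
    (hg : Function.Involutive g) (hfix : ∀ y, g y ≠ y) :
    ∃ T : Set Y, ∀ y, g y ∈ T ↔ y ∉ T := by
  refine ⟨{y | WellOrderingRel y (g y)}, fun y => ?_⟩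
  simp only [Set.mem_ofPred_eq, hg y]
  rcases trichotomous_of WellOrderingRel y (g y) with h | h | h
  · exact iff_of_false (asymm h) (not_not_intro h)
  · exact absurd h.symm (hfix y)
  · exact iff_of_true h (asymm h)

theorem semiconjBy_mul_inv_of_mul_self_eq_one {G : Type*} [Group G] {a b : G}
    (ha : a * a = 1) (hb : b * b = 1) : SemiconjBy a (a * b) (a * b)⁻¹ := by
  rw [SemiconjBy, ← mul_assoc, ha, one_mul, mul_inv_rev, inv_mul_cancel_right]
  exact eq_inv_of_mul_eq_one_left hb

namespace Equiv.Perm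

variable {X : Type*} {a b : Perm X}

theorem zpow_mul_apply_ne (ha : a * a = 1) (hb : b * b = 1)
    (ha' : ∀ x, a x ≠ x) (hb' : ∀ x, b x ≠ x) (x : X) (k : ℤ) : ((a * b) ^ k) x ≠ a x := by
  intro hk
  have hreflect : ∀ j : ℤ, a (((a * b) ^ j) x) = ((a * b) ^ (k - j)) x := by
    intro j
    rw [← mul_apply, ((semiconjBy_mul_inv_of_mul_self_eq_one ha hb).zpow_right j).eq,
      mul_apply, ← hk, ← mul_apply, inv_zpow', ← zpow_add, neg_add_eq_sub]
  obtain ⟨j, rfl | rfl⟩ := Int.even_or_odd' k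
  · exact ha' _ ((hreflect j).trans (by ring_nf))
  · apply hb' (((a * b) ^ j) x)
    calc b (((a * b) ^ j) x) = a (((a * b) ^ (1 + j)) x) := by
          rw [zpow_one_add, mul_apply, mul_apply, ← mul_apply a a, ha, one_apply]
      _ = ((a * b) ^ j) x := by rw [hreflect]; ring_nf

end Equiv.Perm

theorem Function.Involutive.exists_set_apply_mem_iff_notMem₂ {X : Type*} {a b : X → X}
    (ha : Function.Involutive a) (hb : Function.Involutive b)
    (ha' : ∀ x, a x ≠ x) (hb' : ∀ x, b x ≠ x) :
    ∃ S : Set X, (∀ x, a x ∈ S ↔ x ∉ S) ∧ (∀ x, b x ∈ S ↔ x ∉ S) := by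
  set A := ha.toPerm a
  set B := hb.toPerm b
  have hA : A * A = 1 := Equiv.ext ha
  have hB : B * B = 1 := Equiv.ext hb
  let s := Equiv.Perm.SameCycle.setoid (A * B)
  have hcompat : ∀ x y, x ≈ y → A x ≈ A y := by
    rintro x y ⟨k, rfl⟩
    refine Equiv.Perm.sameCycle_inv.mp ⟨k, ?_⟩
    rw [← Equiv.Perm.mul_apply, ← Equiv.Perm.mul_apply,
      ((semiconjBy_mul_inv_of_mul_self_eq_one hA hB).zpow_right k).eq, inv_zpow]
  let Abar : Quotient s → Quotient s := Quotient.map A hcompat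
  have hAbar : Function.Involutive Abar := by
    rintro ⟨x⟩
    exact congrArg (Quotient.mk _) (ha x)
  have hAbar' : ∀ c, Abar c ≠ c := by
    rintro ⟨x⟩ hx
    obtain ⟨k, hk⟩ := Quotient.exact hx.symm
    exact Equiv.Perm.zpow_mul_apply_ne hA hB ha' hb' x k hk
  obtain ⟨T, hT⟩ := hAbar.exists_set_apply_mem_iff_notMem hAbar'
  refine ⟨{x | ⟦x⟧ ∈ T}, fun x => hT ⟦x⟧, fun x => ?_⟩
  have hb_eq : ⟦b x⟧ = Abar ⟦x⟧ := by
    have hφ : ⟦(A * B) x⟧ = (⟦x⟧ : Quotient s) :=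
      Quotient.sound (Equiv.Perm.sameCycle_apply_left.mpr (Equiv.Perm.SameCycle.refl _ _))
    rw [← hφ]
    exact congrArg (Quotient.mk _) (ha (b x)).symm
  simp only [Set.mem_ofPred_eq, hb_eq]
  exact hT ⟦x⟧

section Pairings

variable {X Y : Type*} {f : X → Y} {a : X → X}

theorem Function.Involutive.of_fiber_eq_pair (ha : ∀ x x', f x' = f x ↔ x' = x ∨ x' = a x)
    (ha' : ∀ x, a x ≠ x) : Function.Involutive a := fun x =>
  (((ha x _).mp (((ha _ _).mpr (Or.inr rfl)).trans ((ha x _).mpr (Or.inr rfl)))).resolve_right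
    (ha' (a x)))

theorem existsUnique_mem_fiber_of_apply_mem_iff (ha : ∀ x x', f x' = f x ↔ x' = x ∨ x' = a x)
    {S : Set X} (hS : ∀ x, a x ∈ S ↔ x ∉ S) (x : X) : ∃! x', x' ∈ S ∧ f x' = f x := by
  by_cases hx : x ∈ S
  · exact ⟨x, ⟨hx, rfl⟩, fun x' ⟨hx', hf⟩ =>
      ((ha x x').mp hf).resolve_right fun h => (hS x).mp (h ▸ hx') hx⟩
  · exact ⟨a x, ⟨(hS x).mpr hx, (ha x _).mpr (Or.inr rfl)⟩, fun x' ⟨hx', hf⟩ =>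
      ((ha x x').mp hf).resolve_left fun h => hx (h ▸ hx')⟩

theorem exists_common_transversal {Z : Type*} {g : X → Z} {b : X → X}
    (ha : ∀ x x', f x' = f x ↔ x' = x ∨ x' = a x) (ha' : ∀ x, a x ≠ x)
    (hb : ∀ x x', g x' = g x ↔ x' = x ∨ x' = b x) (hb' : ∀ x, b x ≠ x) :
    ∃ S : Set X, (∀ x, ∃! x', x' ∈ S ∧ f x' = f x) ∧ ∀ x, ∃! x', x' ∈ S ∧ g x' = g x := by
  obtain ⟨S, haS, hbS⟩ := Function.Involutive.exists_set_apply_mem_iff_notMem₂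
    (.of_fiber_eq_pair ha ha') (.of_fiber_eq_pair hb hb') ha' hb'
  exact ⟨S, existsUnique_mem_fiber_of_apply_mem_iff ha haS,
    existsUnique_mem_fiber_of_apply_mem_iff hb hbS⟩

end Pairings

namespace Multigraph

variable {V E : Type} {G : Multigraph V E}

theorem ncard_incident_compl_eq_two {M : Set E} {v : V} (hloop : ∀ e, ¬ (G.ends e).IsDiag)
    (hdeg : G.degOn Set.univ v = 3) (hM : ∃! e, e ∈ M ∧ v ∈ G.ends e) :
    {e ∈ Mᶜ | v ∈ G.ends e}.ncard = 2 := by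
  obtain ⟨m, ⟨hmM, hvm⟩, hm⟩ := hM
  have hloops : {e | G.ends e = s(v, v)} = ∅ :=
    Set.eq_empty_of_forall_notMem fun e he => hloop e (he ▸ Sym2.mk_isDiag_iff.mpr rfl)
  have hinc : {e | v ∈ G.ends e}.ncard = 3 := by
    simpa [degOn, hloops] using hdeg
  have hcompl : {e ∈ Mᶜ | v ∈ G.ends e} = {e | v ∈ G.ends e} \ {m} := by
    ext e
    simp only [Set.mem_sdiff, Set.mem_compl_iff, Set.mem_ofPred_eq, Set.mem_singleton_iff]
    exact ⟨fun ⟨he, hv⟩ => ⟨hv, fun h => he (h ▸ hmM)⟩,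
      fun ⟨hv, he⟩ => ⟨fun hM => he (hm e ⟨hM, hv⟩), hv⟩⟩
  rw [hcompl, Set.ncard_sdiff_singleton_of_mem (s := {e | v ∈ G.ends e}) hvm, hinc]

theorem exists_out_edge {N : Set E} (hN : ∀ e ∈ N, ¬ (G.ends e).IsDiag)
    (h2 : ∀ v, {e ∈ N | v ∈ G.ends e}.ncard = 2) :
    ∃ out : V → E, (∀ v, out v ∈ N ∧ v ∈ G.ends (out v)) ∧ ∀ f ∈ N, ∃! v, out v = f := by
  classical
  choose x y hxy hxy_eq using fun v => Set.ncard_eq_two.mp (h2 v)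
  have hinc : ∀ v e, e ∈ N ∧ v ∈ G.ends e ↔ e = x v ∨ e = y v := fun v e =>
    Set.ext_iff.mp (hxy_eq v) e
  let X := {d : V × E // d.2 ∈ N ∧ d.1 ∈ G.ends d.2}
  let α : X → X := fun d => ⟨(Sym2.Mem.other d.2.2, d.1.2), d.2.1, Sym2.other_mem _⟩
  let β : X → X := fun d => ⟨(d.1.1, Equiv.swap (x d.1.1) (y d.1.1) d.1.2), (hinc _ _).mpr <| by
    rcases (hinc _ _).mp d.2 with h | h <;> simp [h]⟩
  have hα : ∀ d d' : X, d'.1.2 = d.1.2 ↔ d' = d ∨ d' = α d := by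
    refine fun d d' => ⟨fun he => ?_, by rintro (rfl | rfl) <;> rfl⟩
    have hmem : d'.1.1 ∈ s(d.1.1, Sym2.Mem.other d.2.2) := by
      rw [Sym2.other_spec, ← he]; exact d'.2.2
    exact (Sym2.mem_iff.mp hmem).imp (fun h => Subtype.ext (Prod.ext h he))
      (fun h => Subtype.ext (Prod.ext h he))
  have hβ : ∀ d d' : X, d'.1.1 = d.1.1 ↔ d' = d ∨ d' = β d := by
    refine fun d d' => ⟨fun hv => ?_, by rintro (rfl | rfl) <;> rfl⟩
    have h1 := (hinc _ _).mp d.2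
    have h2 := (hinc _ _).mp d'.2
    rw [hv] at h2
    have he : d'.1.2 = d.1.2 ∨ d'.1.2 = Equiv.swap (x d.1.1) (y d.1.1) d.1.2 := by
      rcases h1 with h1 | h1 <;> rcases h2 with h2 | h2 <;> simp [h1, h2]
    exact he.imp (fun h => Subtype.ext (Prod.ext hv h)) (fun h => Subtype.ext (Prod.ext hv h))
  have hα' : ∀ d, α d ≠ d := fun d h =>
    Sym2.other_ne (hN _ d.2.1) d.2.2 (congrArg (·.1.1) h)
  have hβ' : ∀ d, β d ≠ d := fun d h =>
    Equiv.swap_apply_ne_self_iff.mpr ⟨hxy _, (hinc _ _).mp d.2⟩ (congrArg (·.1.2) h)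
  obtain ⟨S, hSv, hSe⟩ := exists_common_transversal hβ hβ' hα hα'
  choose dv hdv using fun v => (hSv ⟨(v, x v), (hinc v _).mpr (Or.inl rfl)⟩).exists
  refine ⟨fun v => (dv v).1.2, fun v => by simpa only [(hdv v).2] using (dv v).2, fun f hf => ?_⟩
  obtain ⟨d, ⟨hdS, hdf⟩, hd⟩ := hSe ⟨((G.ends f).out.1, f), hf, Sym2.out_fst_mem _⟩
  change d.1.2 = f at hdf
  refine ⟨d.1.1, ?_, fun v (hv : (dv v).1.2 = f) => ?_⟩
  · change (dv d.1.1).1.2 = f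
    rw [(hSv d).unique (hdv d.1.1) ⟨hdS, rfl⟩, hdf]
  · calc v = (dv v).1.1 := (hdv v).2.symm
      _ = d.1.1 := by rw [hd (dv v) ⟨(hdv v).1, hv⟩]

theorem eq_of_ends_out_eq {N : Set E} {out : V → E} (hN : ∀ e ∈ N, ¬ (G.ends e).IsDiag)
    (h2 : ∀ v, {e ∈ N | v ∈ G.ends e}.ncard = 2)
    (hout : ∀ v, out v ∈ N ∧ v ∈ G.ends (out v)) (hsrc : ∀ f ∈ N, ∃! v, out v = f)
    {u w c : V} (hu : G.ends (out u) = s(u, c)) (hw : G.ends (out w) = s(w, c)) : u = w := by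
  have hinj : ∀ v v', out v = out v' → v = v' := fun v v' h =>
    (hsrc _ (hout v').1).unique h rfl
  have hcu : c ≠ u := fun h => hN _ (hout u).1 (hu ▸ Sym2.mk_isDiag_iff.mpr h.symm)
  have hcw : c ≠ w := fun h => hN _ (hout w).1 (hw ▸ Sym2.mk_isDiag_iff.mpr h.symm)
  by_contra huw
  have hsub : ({out u, out w, out c} : Set E) ⊆ {e ∈ N | c ∈ G.ends e} := by
    rintro e (rfl | rfl | rfl)
    · exact ⟨(hout u).1, hu ▸ Sym2.mem_mk_right _ _⟩
    · exact ⟨(hout w).1, hw ▸ Sym2.mem_mk_right _ _⟩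
    · exact hout c
  have hle := Set.ncard_le_ncard hsub (Set.finite_of_ncard_ne_zero (by rw [h2 c]; decide))
  have huw' : out u ≠ out w := fun h => huw (hinj _ _ h)
  have huc : out u ≠ out c := fun h => hcu (hinj _ _ h).symm
  have hwc : out w ≠ out c := fun h => hcw (hinj _ _ h).symm
  rw [h2 c, Set.ncard_eq_three.mpr ⟨_, _, _, huw', huc, hwc, rfl⟩] at hle
  omega

def kotzigPath (G : Multigraph V E) (out : V → E) (e : E) : Set E :=
  insert e (out '' {v | v ∈ G.ends e})

theorem kotzigPath_eq {out : V → E} {e : E} {u w : V} (huw : G.ends e = s(u, w)) :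
    G.kotzigPath out e = {out u, e, out w} := by
  have hends : {v | v ∈ G.ends e} = {u, w} := by
    ext v
    simp [huw]
  rw [kotzigPath, hends, Set.image_pair, Set.insert_comm]

theorem isP4_kotzigPath {M : Set E} {out : V → E} (hloop : ∀ e, ¬ (G.ends e).IsDiag)
    (hinj : Function.Injective G.ends) (h2 : ∀ v, {e ∈ Mᶜ | v ∈ G.ends e}.ncard = 2)
    (hout : ∀ v, out v ∈ Mᶜ ∧ v ∈ G.ends (out v)) (hsrc : ∀ f ∈ Mᶜ, ∃! v, out v = f)
    {e : E} (he : e ∈ M) : G.IsP4 (G.kotzigPath out e) := by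
  have hne : ∀ {f x y}, G.ends f = s(x, y) → x ≠ y := fun h hxy =>
    hloop _ (h ▸ Sym2.mk_isDiag_iff.mpr hxy)
  obtain ⟨u, w, huw⟩ := Sym2.exists.mp ⟨G.ends e, rfl⟩
  obtain ⟨a, ha⟩ : ∃ a, G.ends (out u) = s(u, a) := ⟨_, (Sym2.other_spec (hout u).2).symm⟩
  obtain ⟨b, hb⟩ : ∃ b, G.ends (out w) = s(w, b) := ⟨_, (Sym2.other_spec (hout w).2).symm⟩
  have hue : out u ≠ e := fun h => (hout u).1 (h ▸ he)
  have hwe : out w ≠ e := fun h => (hout w).1 (h ▸ he)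
  have haw : a ≠ w := by
    rintro rfl
    exact hue (hinj (ha.trans huw.symm))
  have hbu : b ≠ u := by
    rintro rfl
    exact hwe (hinj (hb.trans (huw.trans Sym2.eq_swap).symm))
  have hab : a ≠ b := by
    rintro rfl
    exact hne huw (eq_of_ends_out_eq (fun e _ => hloop e) h2 hout hsrc ha hb)
  have huw' : out u ≠ out w := fun h => by
    rcases Sym2.eq_iff.mp (ha.symm.trans (h ▸ hb)) with ⟨h1, _⟩ | ⟨_, h2⟩
    · exact hne huw h1
    · exact haw h2
  rw [kotzigPath_eq huw]
  exact ⟨a, u, w, b, out u, e, out w, (hne ha).symm, haw, hab, hne huw, hbu.symm, hne hb,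
    hue, huw', hwe.symm, rfl, ha.trans Sym2.eq_swap, huw, hb⟩

theorem existsUnique_mem_kotzigPath {M : Set E} {out : V → E}
    (hM : ∀ v, ∃! e, e ∈ M ∧ v ∈ G.ends e)
    (hout : ∀ v, out v ∈ Mᶜ ∧ v ∈ G.ends (out v)) (hsrc : ∀ f ∈ Mᶜ, ∃! v, out v = f)
    (f : E) : ∃! e, e ∈ M ∧ f ∈ G.kotzigPath out e := by
  have hmem : ∀ e, f ∈ G.kotzigPath out e ↔ f = e ∨ ∃ v ∈ G.ends e, out v = f := by
    simp [kotzigPath]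
  refine existsUnique_of_exists_of_unique ?_ ?_
  · by_cases hf : f ∈ M
    · exact ⟨f, hf, (hmem f).mpr (Or.inl rfl)⟩
    · obtain ⟨v, hv, -⟩ := hsrc f hf
      obtain ⟨e, ⟨he, hve⟩, -⟩ := hM v
      exact ⟨e, he, (hmem e).mpr (Or.inr ⟨v, hve, hv⟩)⟩
  · rintro e₁ e₂ ⟨he₁, hf₁⟩ ⟨he₂, hf₂⟩
    rcases (hmem e₁).mp hf₁, (hmem e₂).mp hf₂ with ⟨rfl | ⟨v₁, hv₁, rfl⟩, rfl | ⟨v₂, hv₂, hf⟩⟩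
    · rfl
    · exact absurd (hf ▸ he₁) (hout v₂).1
    · exact absurd he₂ (hout v₁).1
    · obtain rfl := (hsrc _ (hout v₁).1).unique hf rfl
      exact (hM v₂).unique ⟨he₁, hv₁⟩ ⟨he₂, hv₂⟩

end Multigraph

/-- **Kotzig's theorem.** Let `M` be a perfect matching of a simple cubic
graph `G`. Then the edge set of `G` can be partitioned into paths of length
exactly `3` (a `P4`-decomposition). -/
theorem p4_decomposition {V E : Type} (G : Multigraph V E)
    (hsimple : (∀ e : E, ¬ (G.ends e).IsDiag) ∧ Function.Injective G.ends)
    (hcubic : G.CubicOn Set.univ Set.univ)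
    (M : Set E) (hM : G.IsPerfectMatchingOn Set.univ Set.univ M) :
    ∃ D : Set (Set E), (∀ P ∈ D, G.IsP4 P) ∧ ∀ e : E, ∃! P, P ∈ D ∧ e ∈ P := by
  obtain ⟨hloop, hinj⟩ := hsimple
  have hMv : ∀ v, ∃! e, e ∈ M ∧ v ∈ G.ends e := fun v => hM.2.2 v trivial
  have h2 : ∀ v, {e ∈ Mᶜ | v ∈ G.ends e}.ncard = 2 := fun v =>
    Multigraph.ncard_incident_compl_eq_two hloop (hcubic.2 v trivial) (hMv v)
  obtain ⟨out, hout, hsrc⟩ := Multigraph.exists_out_edge (fun e _ => hloop e) h2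
  refine ⟨G.kotzigPath out '' M, ?_, fun f => ?_⟩
  · rintro _ ⟨e, he, rfl⟩
    exact Multigraph.isP4_kotzigPath hloop hinj h2 hout hsrc he
  · obtain ⟨e, ⟨he, hf⟩, huniq⟩ := Multigraph.existsUnique_mem_kotzigPath hMv hout hsrc f
    refine ⟨_, ⟨⟨e, he, rfl⟩, hf⟩, ?_⟩
    rintro _ ⟨⟨e', he', rfl⟩, hf'⟩
    rw [huniq e' ⟨he', hf'⟩]
end
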